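/- arXiv:1912.08327 — 5 statements merged into one kernel-verified Lean document; each statement's English description precedes it below -/
import Mathlib

section
/- Let G be a finite connected simple graph on vertex set V, let λ be an eigenvalue of the Laplacian matrix L = D − A with eigenvector φ : V → ℝ, and let s, t ∈ V. Let (X_j)_{j≥0} be the simple random walk on G started at X₀ = s (at each step, the walk moves to a uniformly random neighbor of the current vertex), and let τ = inf{ j ≥ 0 : X_j = t } be the first hitting time of t, which is almost surely finite. Then the expected payoff of the game satisfies E[ Σ_{j=0}^{τ−1} λ · φ(X_j) / deg(X_j) ] = φ(s) − φ(t). -/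
/-!
Write `𝓛h(u) = ∑ᵥ p(u,v) h(v) - h(u)` for the generator of the walk with kernel
`p(u,v) = 1/deg u` on edges. The eigen-equation `Lφ = λφ` says exactly that
`𝓛φ(u) = -λφ(u)/deg u` at every vertex of positive degree, and every `u ≠ t` has positive degree.
So the claim is Dynkin's formula `E[φ(X_τ)] = φ(s) + E[∑_{j<τ} 𝓛φ(X_j)]` together with `X_τ = t`.

Dynkin's formula holds for the bounded times `min M τ` by the Markov property, one step at a time,
and passes to the limit `M → ∞` by dominated convergence once `E[τ] < ∞`. The latter holds because
from any `u ≠ t` the walk follows a fixed path to `t` of length `< |V|` with probability at least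
`(max deg)^(-|V|)`, so `P(τ > n)` decays geometrically.
-/

open Matrix

/-- `(l, φ)` is an eigenpair of the (combinatorial) graph Laplacian `L = D - A`. -/
def SimpleGraph.IsLapEigenpair {V : Type*} [Fintype V] [DecidableEq V]
    (G : SimpleGraph V) [DecidableRel G.Adj] (l : ℝ) (φ : V → ℝ) : Prop :=
  φ ≠ 0 ∧ G.lapMatrix ℝ *ᵥ φ = l • φ

/-- `l` is the second-smallest eigenvalue `λ₂(G)` of the Laplacian of a connected graph,
i.e. its smallest positive eigenvalue. -/
def SimpleGraph.IsSecondLapEigenvalue {V : Type*} [Fintype V] [DecidableEq V]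
    (G : SimpleGraph V) [DecidableRel G.Adj] (l : ℝ) : Prop :=
  (∃ φ, G.IsLapEigenpair l φ) ∧ 0 < l ∧
    ∀ μ : ℝ, 0 < μ → (∃ ψ, G.IsLapEigenpair μ ψ) → l ≤ μ

open MeasureTheory

open Filter Topology
open scoped ENNReal

section MarkovChain

variable {V Ω : Type*} {X : ℕ → Ω → V}

def pathUpTo (X : ℕ → Ω → V) (n : ℕ) (ω : Ω) : Fin (n + 1) → V := fun j => X j ω

lemma preimage_pathUpTo_singleton (n : ℕ) (w : ℕ → V) :
    pathUpTo X n ⁻¹' {(fun j => w j : Fin (n + 1) → V)} = {ω | ∀ j ≤ n, X j ω = w j} := by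
  ext ω
  simp [pathUpTo, funext_iff, Fin.forall_iff]

variable [MeasurableSpace Ω] {P : Measure Ω} {p : V → V → ℝ≥0∞}

def IsMarkovChain (P : Measure Ω) (X : ℕ → Ω → V) (p : V → V → ℝ≥0∞) : Prop :=
  ∀ (n : ℕ) (w : ℕ → V), P {ω | ∀ j ≤ n + 1, X j ω = w j} =
    P {ω | ∀ j ≤ n, X j ω = w j} * p (w n) (w (n + 1))

namespace IsMarkovChain

lemma measure_forall_le_add (hM : IsMarkovChain P X p) (w : ℕ → V) (n L : ℕ) :
    P {ω | ∀ j ≤ n + L, X j ω = w j} =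
      P {ω | ∀ j ≤ n, X j ω = w j} * ∏ i ∈ Finset.range L, p (w (n + i)) (w (n + i + 1)) := by
  induction L with
  | zero => simp
  | succ L ih => rw [← add_assoc, hM, ih, Finset.prod_range_succ, mul_assoc, add_assoc]

lemma measure_succ_inter_pathUpTo (hM : IsMarkovChain P X p) (n : ℕ)
    (y : Fin (n + 1) → V) (v : V) :
    P (X (n + 1) ⁻¹' {v} ∩ pathUpTo X n ⁻¹' {y}) =
      P (pathUpTo X n ⁻¹' {y}) * p (y (Fin.last n)) v := by
  set w : ℕ → V := fun j => if h : j < n + 1 then y ⟨j, h⟩ else v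
  have hy : (fun j : Fin (n + 1) => w j) = y := funext fun j => dif_pos j.isLt
  have hsucc : {ω | ∀ j ≤ n + 1, X j ω = w j} = X (n + 1) ⁻¹' {v} ∩ pathUpTo X n ⁻¹' {y} := by
    rw [← hy, preimage_pathUpTo_singleton]
    ext ω
    simp [w, Nat.le_succ_iff, or_imp, forall_and, and_comm]
  have := hM n w
  rwa [hsucc, ← preimage_pathUpTo_singleton, hy,
    show w n = y (Fin.last n) from dif_pos n.lt_succ_self,
    show w (n + 1) = v from dif_neg (lt_irrefl _)] at this

end IsMarkovChain

variable [MeasurableSpace V]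

lemma measurableSet_preimage_pathUpTo [Finite V] [MeasurableSingletonClass V]
    (hX : ∀ n, Measurable (X n)) (n : ℕ) (S : Set (Fin (n + 1) → V)) :
    MeasurableSet (pathUpTo X n ⁻¹' S) :=
  measurable_pi_lambda (pathUpTo X n) (fun j => hX j) S.toFinite.measurableSet

lemma measure_inter_preimage_pathUpTo [Finite V] [MeasurableSingletonClass V]
    (hX : ∀ n, Measurable (X n)) (n : ℕ) (T : Set Ω) (S : Finset (Fin (n + 1) → V)) :
    P (T ∩ pathUpTo X n ⁻¹' S) = ∑ y ∈ S, P (T ∩ pathUpTo X n ⁻¹' {y}) := by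
  have hmeas := measurableSet_preimage_pathUpTo (X := X) hX n
  simp_rw [Set.inter_comm T, ← Measure.restrict_apply (hmeas _)]
  exact (sum_measure_preimage_singleton S fun y _ => hmeas _).symm

lemma setIntegral_comp_eq_sum [Fintype V] [MeasurableSingletonClass V] [IsFiniteMeasure P]
    {Y : Ω → V} (hY : Measurable Y) (E : Set Ω) (h : V → ℝ) :
    ∫ ω in E, h (Y ω) ∂P = ∑ v, P.real (Y ⁻¹' {v} ∩ E) * h v := by
  rw [← integral_map hY.aemeasurable (by fun_prop), integral_fintype .of_finite]
  simp [Measure.real, Measure.map_apply hY (measurableSet_singleton _),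
    Measure.restrict_apply (hY (measurableSet_singleton _)), mul_comm]

namespace IsMarkovChain

variable [Fintype V] [MeasurableSingletonClass V]

lemma measure_succ_inter_preimage_pathUpTo (hM : IsMarkovChain P X p)
    (hX : ∀ n, Measurable (X n)) (n : ℕ) (S : Finset (Fin (n + 1) → V)) (v : V) :
    P (X (n + 1) ⁻¹' {v} ∩ pathUpTo X n ⁻¹' S) =
      ∑ u, P (X n ⁻¹' {u} ∩ pathUpTo X n ⁻¹' S) * p u v := by
  classical
  have hfiber : ∀ u, X n ⁻¹' {u} ∩ pathUpTo X n ⁻¹' S =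
      pathUpTo X n ⁻¹' ↑(S.filter fun y => y (Fin.last n) = u) := by
    intro u
    ext ω
    simp [pathUpTo, and_comm]
  rw [measure_inter_preimage_pathUpTo hX]
  simp_rw [hM.measure_succ_inter_pathUpTo, hfiber,
    ← sum_measure_preimage_singleton _ fun _ _ => measurableSet_preimage_pathUpTo hX n _,
    Finset.sum_mul]
  rw [← Finset.sum_fiberwise S fun y => y (Fin.last n)]
  exact Finset.sum_congr rfl fun u _ => Finset.sum_congr rfl fun y hy => by
    rw [(Finset.mem_filter.1 hy).2]

lemma setIntegral_comp_succ [IsFiniteMeasure P] (hM : IsMarkovChain P X p)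
    (hX : ∀ n, Measurable (X n)) (hp : ∀ u v, p u v ≠ ∞) (n : ℕ)
    (S : Finset (Fin (n + 1) → V)) (h : V → ℝ) :
    ∫ ω in pathUpTo X n ⁻¹' S, h (X (n + 1) ω) ∂P =
      ∫ ω in pathUpTo X n ⁻¹' S, ∑ v, (p (X n ω) v).toReal * h v ∂P := by
  have hreal : ∀ v, P.real (X (n + 1) ⁻¹' {v} ∩ pathUpTo X n ⁻¹' S) =
      ∑ u, P.real (X n ⁻¹' {u} ∩ pathUpTo X n ⁻¹' S) * (p u v).toReal := by
    intro v
    rw [measureReal_def, hM.measure_succ_inter_preimage_pathUpTo hX,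
      ENNReal.toReal_sum fun u _ => ENNReal.mul_ne_top (measure_ne_top _ _) (hp u v)]
    simp [measureReal_def, ENNReal.toReal_mul]
  rw [setIntegral_comp_eq_sum (hX _), setIntegral_comp_eq_sum (hX n) _
    fun u => ∑ v, (p u v).toReal * h v]
  simp_rw [hreal, Finset.sum_mul, Finset.mul_sum]
  rw [Finset.sum_comm]
  exact Finset.sum_congr rfl fun u _ => Finset.sum_congr rfl fun v _ => by ring

end IsMarkovChain

end MarkovChain

lemma ENNReal.tsum_ne_top_of_le_mul_shift {a : ℕ → ℝ≥0∞} (ha : Antitone a) (ha0 : a 0 ≠ ∞)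
    {N : ℕ} (hN : 0 < N) {r : ℝ≥0∞} (hr : r < 1) (h : ∀ n, a (n + N) ≤ r * a n) :
    ∑' n, a n ≠ ∞ := by
  have : NeZero N := ⟨hN.ne'⟩
  have hpow : ∀ k, a (k * N) ≤ r ^ k * a 0 := by
    intro k
    induction k with
    | zero => simp
    | succ k ih =>
      calc a ((k + 1) * N) = a (k * N + N) := by rw [add_mul, one_mul]
        _ ≤ r * a (k * N) := h _
        _ ≤ r * (r ^ k * a 0) := by gcongr
        _ = r ^ (k + 1) * a 0 := by ring
  have hle : ∀ n, a n ≤ r ^ (n / N) * a 0 := fun n =>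
    (ha (Nat.div_mul_le_self n N)).trans (hpow _)
  have hsum : ∑' n, r ^ (n / N) * a 0 = N * (1 - r)⁻¹ * a 0 := by
    calc ∑' n, r ^ (n / N) * a 0 = ∑' x : ℕ × Fin N, r ^ x.1 * a 0 :=
          Equiv.tsum_eq (Nat.divModEquiv N) fun x : ℕ × Fin N => r ^ x.1 * a 0
      _ = ∑' k, ∑' _ : Fin N, r ^ k * a 0 := ENNReal.tsum_prod (f := fun k _ => r ^ k * a 0)
      _ = ∑' k, N * (r ^ k * a 0) := by simp
      _ = N * (1 - r)⁻¹ * a 0 := by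
        rw [ENNReal.tsum_mul_left, ENNReal.tsum_mul_right, ENNReal.tsum_geometric, mul_assoc]
  refine ne_top_of_le_ne_top ?_ ((ENNReal.tsum_le_tsum hle).trans_eq hsum)
  exact ENNReal.mul_ne_top (ENNReal.mul_ne_top (ENNReal.natCast_ne_top N)
    (ENNReal.inv_ne_top.2 (tsub_pos_of_lt hr).ne')) ha0

lemma lintegral_natCast_eq_tsum {Ω : Type*} [MeasurableSpace Ω] {P : Measure Ω} {τ : Ω → ℕ}
    (hτ : Measurable τ) : ∫⁻ ω, (τ ω : ℝ≥0∞) ∂P = ∑' n, P {ω | n < τ ω} := by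
  have hpt : ∀ ω, (τ ω : ℝ≥0∞) = ∑' n, {ω | n < τ ω}.indicator 1 ω := by
    intro ω
    rw [tsum_eq_sum (s := Finset.range (τ ω)) fun n hn =>
      Set.indicator_of_notMem (by simpa using hn) _,
      Finset.sum_congr rfl fun n hn => Set.indicator_of_mem (s := {ω | n < τ ω})
        (Finset.mem_range.1 hn) 1]
    simp
  have hmeas : ∀ n, MeasurableSet {ω | n < τ ω} := fun n => measurableSet_lt measurable_const hτ
  simp_rw [hpt]
  rw [lintegral_tsum fun n => (measurable_one.indicator (hmeas n)).aemeasurable]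
  exact tsum_congr fun n => lintegral_indicator_one (hmeas n)

lemma integrable_natCast_of_tsum_ne_top {Ω : Type*} [MeasurableSpace Ω] {P : Measure Ω}
    {τ : Ω → ℕ} (hτ : Measurable τ) (h : ∑' n, P {ω | n < τ ω} ≠ ∞) :
    Integrable (fun ω => (τ ω : ℝ)) P := by
  refine ⟨(measurable_from_top.comp hτ).aestronglyMeasurable, ?_⟩
  rw [hasFiniteIntegral_iff_enorm]
  simpa [lintegral_natCast_eq_tsum hτ] using h.lt_top

section Hitting

variable {V Ω : Type*} {X : ℕ → Ω → V} {t : V}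

def avoidUntil (X : ℕ → Ω → V) (t : V) (n : ℕ) : Set Ω := {ω | ∀ j ≤ n, X j ω ≠ t}

lemma antitone_avoidUntil : Antitone (avoidUntil X t) :=
  fun _ _ hmn _ hω j hj => hω j (hj.trans hmn)

lemma avoidUntil_eq_preimage_pathUpTo [Fintype V] [DecidableEq V] (n : ℕ) :
    avoidUntil X t n =
      pathUpTo X n ⁻¹' ↑(Finset.univ.filter fun y : Fin (n + 1) → V => ∀ j, y j ≠ t) := by
  ext ω
  simp [avoidUntil, pathUpTo, Fin.forall_iff]

def UniformlyReaches (p : V → V → ℝ≥0∞) (t : V) (N : ℕ) (δ : ℝ≥0∞) : Prop :=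
  ∀ u, u ≠ t → ∃ L ≤ N, ∃ w : ℕ → V,
    w 0 = u ∧ w L = t ∧ δ ≤ ∏ i ∈ Finset.range L, p (w i) (w (i + 1))

variable [MeasurableSpace Ω] {P : Measure Ω} {p : V → V → ℝ≥0∞}

lemma setOf_lt_ae_eq_avoidUntil {τ : Ω → ℕ}
    (hτ : ∀ᵐ ω ∂P, X (τ ω) ω = t ∧ ∀ j < τ ω, X j ω ≠ t) (n : ℕ) :
    {ω | n < τ ω} =ᵐ[P] avoidUntil X t n := by
  filter_upwards [hτ] with ω ⟨hhit, hbefore⟩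
  exact propext ⟨fun hn j hj => hbefore j (hj.trans_lt hn),
    fun havoid => lt_of_not_ge fun hτn => havoid _ hτn hhit⟩

namespace IsMarkovChain

variable [MeasurableSpace V] [Fintype V] [MeasurableSingletonClass V] [IsFiniteMeasure P]

-- Extending `y` by a path from its endpoint to `t` gives an event of probability
-- `≥ δ * P (pathUpTo X n ⁻¹' {y})` on which `t` is hit by time `n + N`.
lemma measure_avoidUntil_inter_pathUpTo_le (hM : IsMarkovChain P X p) (hX : ∀ n, Measurable (X n))
    {N : ℕ} {δ : ℝ≥0∞} (hreach : UniformlyReaches p t N δ)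
    (n : ℕ) (y : Fin (n + 1) → V) (hy : y (Fin.last n) ≠ t) :
    P (avoidUntil X t (n + N) ∩ pathUpTo X n ⁻¹' {y}) ≤ (1 - δ) * P (pathUpTo X n ⁻¹' {y}) := by
  obtain ⟨L, hLN, w, hw0, hwL, hδ⟩ := hreach _ hy
  set w' : ℕ → V := fun j => if h : j < n + 1 then y ⟨j, h⟩ else w (j - n)
  have hw' : ∀ i, w' (n + i) = w i := by
    rintro (_ | i)
    · simp [w', hw0, Fin.last]
    · simp [w']
  have hy' : (fun j : Fin (n + 1) => w' j) = y := funext fun j => dif_pos j.isLt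
  set C := {ω | ∀ j ≤ n + L, X j ω = w' j}
  have hPC : δ * P (pathUpTo X n ⁻¹' {y}) ≤ P C := by
    rw [hM.measure_forall_le_add, ← preimage_pathUpTo_singleton, hy', mul_comm]
    simp_rw [add_assoc, hw']
    gcongr
  have hCsub : C ⊆ pathUpTo X n ⁻¹' {y} := by
    rw [← hy', preimage_pathUpTo_singleton]
    exact fun ω hω j hj => hω j (by omega)
  have hdisj : Disjoint (avoidUntil X t (n + N) ∩ pathUpTo X n ⁻¹' {y}) C := by
    refine Set.disjoint_left.2 fun ω hω hωC => hω.1 (n + L) (by omega) ?_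
    rw [hωC (n + L) le_rfl, hw', hwL]
  have hCmeas : MeasurableSet C := by
    have := measurableSet_preimage_pathUpTo hX (n + L) {fun j => w' j.val}
    rwa [preimage_pathUpTo_singleton] at this
  have hsum : P (avoidUntil X t (n + N) ∩ pathUpTo X n ⁻¹' {y}) + P C ≤
      P (pathUpTo X n ⁻¹' {y}) := by
    rw [← measure_union hdisj hCmeas]
    exact measure_mono (Set.union_subset Set.inter_subset_right hCsub)
  calc P (avoidUntil X t (n + N) ∩ pathUpTo X n ⁻¹' {y})
      ≤ P (pathUpTo X n ⁻¹' {y}) - P C :=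
        ENNReal.le_sub_of_add_le_right (measure_ne_top _ _) hsum
    _ ≤ P (pathUpTo X n ⁻¹' {y}) - δ * P (pathUpTo X n ⁻¹' {y}) := tsub_le_tsub_left hPC _
    _ = (1 - δ) * P (pathUpTo X n ⁻¹' {y}) := by
        rw [ENNReal.sub_mul fun _ _ => measure_ne_top _ _, one_mul]

lemma measure_avoidUntil_add_le_mul (hM : IsMarkovChain P X p) (hX : ∀ n, Measurable (X n))
    {N : ℕ} {δ : ℝ≥0∞} (hreach : UniformlyReaches p t N δ)
    (n : ℕ) : P (avoidUntil X t (n + N)) ≤ (1 - δ) * P (avoidUntil X t n) := by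
  classical
  have hsub : avoidUntil X t (n + N) = avoidUntil X t (n + N) ∩ avoidUntil X t n :=
    (Set.inter_eq_left.2 (antitone_avoidUntil (Nat.le_add_right n N))).symm
  rw [hsub, avoidUntil_eq_preimage_pathUpTo n, measure_inter_preimage_pathUpTo hX,
    ← sum_measure_preimage_singleton _ fun _ _ => measurableSet_preimage_pathUpTo hX n _,
    Finset.mul_sum]
  refine Finset.sum_le_sum fun y hy => ?_
  exact hM.measure_avoidUntil_inter_pathUpTo_le hX hreach n y ((Finset.mem_filter.1 hy).2 _)

lemma integrable_hittingTime (hM : IsMarkovChain P X p) (hX : ∀ n, Measurable (X n))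
    {N : ℕ} (hN : 0 < N) {δ : ℝ≥0∞} (hδ : δ ≠ 0)
    (hreach : UniformlyReaches p t N δ)
    {τ : Ω → ℕ} (hτmeas : Measurable τ) (hτ : ∀ n, {ω | n < τ ω} =ᵐ[P] avoidUntil X t n) :
    Integrable (fun ω => (τ ω : ℝ)) P := by
  refine integrable_natCast_of_tsum_ne_top hτmeas ?_
  simp_rw [measure_congr (hτ _)]
  exact ENNReal.tsum_ne_top_of_le_mul_shift (fun m n hmn => measure_mono (antitone_avoidUntil hmn))
    (measure_ne_top _ _) hN (ENNReal.sub_lt_self ENNReal.one_ne_top one_ne_zero hδ)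
    (hM.measure_avoidUntil_add_le_mul hX hreach)

end IsMarkovChain

end Hitting

lemma measurable_apply_index {Ω β : Type*} [MeasurableSpace Ω] [MeasurableSpace β]
    {F : ℕ → Ω → β} (hF : ∀ n, Measurable (F n)) {σ : Ω → ℕ} (hσ : Measurable σ) :
    Measurable fun ω => F (σ ω) ω :=
  (measurable_from_prod_countable_left (f := fun q : Ω × ℕ => F q.2 q.1) hF).comp
    (measurable_id.prodMk hσ)

lemma Finset.sum_range_min {M : Type*} [AddCommMonoid M] (f : ℕ → M) (m k : ℕ) :
    ∑ j ∈ Finset.range (min m k), f j = ∑ j ∈ Finset.range m, if j < k then f j else 0 := by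
  rw [← Finset.sum_filter]
  congr 1
  ext j
  simp

section Dynkin

variable {V Ω : Type*} [Fintype V] [MeasurableSpace V] [MeasurableSingletonClass V]
  [MeasurableSpace Ω] {P : Measure Ω} [IsFiniteMeasure P] {X : ℕ → Ω → V} {p : V → V → ℝ≥0∞}

def markovGenerator (p : V → V → ℝ≥0∞) (h : V → ℝ) (u : V) : ℝ :=
  ∑ v, (p u v).toReal * h v - h u

omit [Fintype V] in
lemma integrable_comp_of_finite [Finite V] {Y : Ω → V} (hY : Measurable Y) (h : V → ℝ) :
    Integrable (fun ω => h (Y ω)) P :=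
  Integrable.of_finite.comp_measurable hY

namespace IsMarkovChain

-- `hτ` says that `τ` is a stopping time for the natural filtration of `X`, up to null sets.
lemma integral_comp_min_eq (hM : IsMarkovChain P X p) (hX : ∀ n, Measurable (X n))
    (hp : ∀ u v, p u v ≠ ∞) {τ : Ω → ℕ} (hτmeas : Measurable τ)
    (hτ : ∀ n, ∃ S : Finset (Fin (n + 1) → V), {ω | n < τ ω} =ᵐ[P] pathUpTo X n ⁻¹' S)
    (h : V → ℝ) (M : ℕ) :
    ∫ ω, h (X (min M (τ ω)) ω) ∂P =
      ∫ ω, h (X 0 ω) ∂P +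
        ∫ ω, ∑ j ∈ Finset.range (min M (τ ω)), markovGenerator p h (X j ω) ∂P := by
  have hmeas : ∀ j, MeasurableSet {ω | j < τ ω} := fun j => measurableSet_lt measurable_const hτmeas
  have hint : ∀ k, Integrable (fun ω => h (X k ω)) P := fun k => integrable_comp_of_finite (hX k) h
  have hstep : ∀ j, ∫ ω, {ω | j < τ ω}.indicator (fun ω => h (X (j + 1) ω) - h (X j ω)) ω ∂P =
      ∫ ω, {ω | j < τ ω}.indicator (fun ω => markovGenerator p h (X j ω)) ω ∂P := by
    intro j
    obtain ⟨S, hS⟩ := hτ j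
    rw [integral_indicator (hmeas j), integral_indicator (hmeas j), setIntegral_congr_set hS,
      setIntegral_congr_set hS, integral_sub (hint _).integrableOn (hint _).integrableOn,
      hM.setIntegral_comp_succ hX hp]
    exact (integral_sub (integrable_comp_of_finite (hX j)
      fun u => ∑ v, (p u v).toReal * h v).integrableOn
      (hint _).integrableOn).symm
  have htelescope : ∀ ω, h (X (min M (τ ω)) ω) = h (X 0 ω) +
      ∑ j ∈ Finset.range M, {ω | j < τ ω}.indicator (fun ω => h (X (j + 1) ω) - h (X j ω)) ω := by
    intro ω
    have := Finset.sum_range_sub (fun j => h (X (min j (τ ω)) ω)) M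
    rw [Nat.zero_min] at this
    rw [← sub_eq_iff_eq_add', ← this]
    refine Finset.sum_congr rfl fun j _ => ?_
    by_cases hj : j < τ ω
    · simp [hj, min_eq_left hj.le]
    · simp [hj, min_eq_right (not_lt.1 hj), min_eq_right (Nat.le_succ_of_le (not_lt.1 hj))]
  have hgen : ∀ ω, ∑ j ∈ Finset.range (min M (τ ω)), markovGenerator p h (X j ω) =
      ∑ j ∈ Finset.range M, {ω | j < τ ω}.indicator (fun ω => markovGenerator p h (X j ω)) ω := by
    intro ω
    simp [Finset.sum_range_min, Set.indicator_apply]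
  simp_rw [htelescope, hgen]
  rw [integral_add (hint 0), integral_finsetSum, integral_finsetSum]
  · simp_rw [hstep]
  · exact fun j _ => (integrable_comp_of_finite (hX j) _).indicator (hmeas j)
  · exact fun j _ => ((hint _).sub (hint _)).indicator (hmeas j)
  · exact integrable_finsetSum _ fun j _ => ((hint _).sub (hint _)).indicator (hmeas j)

theorem integral_comp_stopped_eq (hM : IsMarkovChain P X p) (hX : ∀ n, Measurable (X n))
    (hp : ∀ u v, p u v ≠ ∞) {τ : Ω → ℕ} (hτmeas : Measurable τ)
    (hτ : ∀ n, ∃ S : Finset (Fin (n + 1) → V), {ω | n < τ ω} =ᵐ[P] pathUpTo X n ⁻¹' S)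
    (hτint : Integrable (fun ω => (τ ω : ℝ)) P) (h : V → ℝ) :
    ∫ ω, h (X (τ ω) ω) ∂P =
      ∫ ω, h (X 0 ω) ∂P + ∫ ω, ∑ j ∈ Finset.range (τ ω), markovGenerator p h (X j ω) ∂P := by
  set g := markovGenerator p h
  have hbound : ∀ f : V → ℝ, ∀ u, ‖f u‖ ≤ ∑ v, ‖f v‖ := fun f u =>
    Finset.single_le_sum (f := fun v => ‖f v‖) (fun _ _ => norm_nonneg _) (Finset.mem_univ u)
  have hmin : ∀ M, Measurable fun ω => min M (τ ω) := fun M => measurable_from_nat.comp hτmeas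
  have hsum_meas : ∀ n, Measurable fun ω => ∑ j ∈ Finset.range n, g (X j ω) := fun n =>
    Finset.measurable_sum _ fun j _ => (measurable_of_finite g).comp (hX j)
  have hlim_stopped : Tendsto (fun M => ∫ ω, h (X (min M (τ ω)) ω) ∂P) atTop
      (𝓝 (∫ ω, h (X (τ ω) ω) ∂P)) :=
    tendsto_integral_of_dominated_convergence (fun _ => ∑ v, ‖h v‖)
      (fun M => ((measurable_of_finite h).comp
        (measurable_apply_index hX (hmin M))).aestronglyMeasurable)
      (integrable_const _) (fun M => ae_of_all _ fun ω => hbound h _)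
      (ae_of_all _ fun ω => tendsto_atTop_of_eventually_const (i₀ := τ ω) fun M hM => by
        rw [min_eq_right hM])
  have hlim_sum : Tendsto (fun M => ∫ ω, ∑ j ∈ Finset.range (min M (τ ω)), g (X j ω) ∂P) atTop
      (𝓝 (∫ ω, ∑ j ∈ Finset.range (τ ω), g (X j ω) ∂P)) := by
    refine tendsto_integral_of_dominated_convergence (fun ω => (∑ v, ‖g v‖) * τ ω)
      (fun M => (measurable_apply_index hsum_meas (hmin M)).aestronglyMeasurable)
      (hτint.const_mul _) (fun M => ae_of_all _ fun ω => ?_)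
      (ae_of_all _ fun ω => tendsto_atTop_of_eventually_const (i₀ := τ ω) fun M hM => by
        rw [min_eq_right hM])
    calc ‖∑ j ∈ Finset.range (min M (τ ω)), g (X j ω)‖
        ≤ ∑ j ∈ Finset.range (min M (τ ω)), ∑ v, ‖g v‖ :=
          norm_sum_le_of_le _ fun j _ => hbound g (X j ω)
      _ = (∑ v, ‖g v‖) * (min M (τ ω) : ℕ) := by simp [mul_comm]
      _ ≤ (∑ v, ‖g v‖) * τ ω := by
          gcongr
          exact min_le_right _ _
  refine tendsto_nhds_unique hlim_stopped ?_
  simp_rw [hM.integral_comp_min_eq hX hp hτmeas hτ h]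
  exact tendsto_const_nhds.add hlim_sum

end IsMarkovChain

end Dynkin

namespace SimpleGraph

variable {V : Type*} [Fintype V] (G : SimpleGraph V) [DecidableRel G.Adj]

noncomputable def randomWalkKernel (u v : V) : ℝ≥0∞ :=
  if G.Adj u v then ((G.degree u : ℝ≥0∞))⁻¹ else 0

lemma randomWalkKernel_ne_top (u v : V) : G.randomWalkKernel u v ≠ ∞ := by
  unfold randomWalkKernel
  split_ifs with h
  · exact ENNReal.inv_ne_top.2 (by exact_mod_cast ((G.degree_pos_iff_exists_adj u).2 ⟨v, h⟩).ne')
  · exact ENNReal.zero_ne_top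

lemma markovGenerator_randomWalkKernel [DecidableEq V] {l : ℝ} {φ : V → ℝ}
    (hφ : G.lapMatrix ℝ *ᵥ φ = l • φ) {u : V} (hu : G.degree u ≠ 0) :
    markovGenerator G.randomWalkKernel φ u = -(l * φ u / G.degree u) := by
  have heig := congrFun hφ u
  rw [lapMatrix_mulVec_apply, Pi.smul_apply, smul_eq_mul] at heig
  have hmean : ∑ v, (G.randomWalkKernel u v).toReal * φ v =
      (G.degree u : ℝ)⁻¹ * ∑ v ∈ G.neighborFinset u, φ v := by
    rw [neighborFinset_eq_filter, Finset.sum_filter, Finset.mul_sum]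
    refine Finset.sum_congr rfl fun v _ => ?_
    by_cases h : G.Adj u v <;> simp [randomWalkKernel, h]
  rw [markovGenerator, hmean, show ∑ v ∈ G.neighborFinset u, φ v = G.degree u * φ u - l * φ u by
    linarith]
  field_simp
  ring

variable {G}

lemma Connected.degree_pos_of_ne (hG : G.Connected) {u t : V} (hut : u ≠ t) : 0 < G.degree u :=
  have : Nontrivial V := nontrivial_of_ne u t hut
  hG.preconnected.degree_pos_of_nontrivial u

lemma Connected.uniformlyReaches_randomWalkKernel (hG : G.Connected) (t : V) :
    UniformlyReaches G.randomWalkKernel t (Fintype.card V)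
      (((G.maxDegree : ℝ≥0∞))⁻¹ ^ Fintype.card V) := by
  classical
  intro u hut
  obtain ⟨q⟩ := hG.preconnected u t
  have hpath : q.bypass.IsPath := q.bypass_isPath
  refine ⟨q.bypass.length, hpath.length_lt.le, q.bypass.getVert, q.bypass.getVert_zero,
    q.bypass.getVert_length, ?_⟩
  have hmax : ((G.maxDegree : ℝ≥0∞))⁻¹ ≤ 1 := by
    rw [ENNReal.inv_le_one, Nat.one_le_cast]
    exact (hG.degree_pos_of_ne hut).trans_le (G.degree_le_maxDegree u)
  calc ((G.maxDegree : ℝ≥0∞))⁻¹ ^ Fintype.card V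
      ≤ ((G.maxDegree : ℝ≥0∞))⁻¹ ^ q.bypass.length :=
        pow_le_pow_of_le_one zero_le hmax hpath.length_lt.le
    _ = ∏ _i ∈ Finset.range q.bypass.length, ((G.maxDegree : ℝ≥0∞))⁻¹ := by simp
    _ ≤ _ := Finset.prod_le_prod' fun i hi => by
        rw [randomWalkKernel, if_pos (q.bypass.adj_getVert_succ (Finset.mem_range.1 hi))]
        exact ENNReal.inv_le_inv.2 (Nat.cast_le.2 (G.degree_le_maxDegree _))

end SimpleGraph

/-- Theorem 1 (representation formula): let `G` be a finite connected graph, `(l, φ)` an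
eigenpair of the Laplacian `L = D - A`, and `s, t` two vertices. Let `(X j)` be the simple
random walk on `G` started at `s` (from a vertex, it jumps to a uniformly chosen neighbor)
and let `τ` be the (almost surely finite) first hitting time of `t`. Then the expected
payoff of the game, `E[Σ_{j<τ} l·φ(X j)/deg(X j)]`, equals `φ s - φ t`. -/
theorem expected_payoff_eq {V : Type*} [Fintype V] [DecidableEq V]
    [MeasurableSpace V] [MeasurableSingletonClass V]
    (G : SimpleGraph V) [DecidableRel G.Adj] (hconn : G.Connected)
    (l : ℝ) (φ : V → ℝ) (hpair : G.IsLapEigenpair l φ) (s t : V)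
    {Ω : Type*} [MeasurableSpace Ω] (P : Measure Ω) [IsProbabilityMeasure P]
    (X : ℕ → Ω → V) (hX : ∀ n, Measurable (X n))
    -- the walk starts at `s`
    (h0 : ∀ᵐ ω ∂P, X 0 ω = s)
    -- at each step, the walk jumps to a uniformly chosen random neighbor
    (hstep : ∀ (n : ℕ) (w : ℕ → V),
      P {ω | ∀ j ≤ n + 1, X j ω = w j} =
        P {ω | ∀ j ≤ n, X j ω = w j} *
          (if G.Adj (w n) (w (n + 1)) then ((G.degree (w n) : ENNReal))⁻¹ else 0))
    -- `τ` is the first hitting time of `t`, which is almost surely finite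
    (τ : Ω → ℕ) (hτmeas : Measurable τ)
    (hτ : ∀ᵐ ω ∂P, X (τ ω) ω = t ∧ ∀ j < τ ω, X j ω ≠ t) :
    ∫ ω, (∑ j ∈ Finset.range (τ ω), l * φ (X j ω) / (G.degree (X j ω) : ℝ)) ∂P
      = φ s - φ t := by
  have hM : IsMarkovChain P X G.randomWalkKernel := hstep
  have hstop := setOf_lt_ae_eq_avoidUntil hτ
  have hτint := hM.integrable_hittingTime hX (Fintype.card_pos_iff.2 ⟨s⟩)
    (pow_ne_zero _ (ENNReal.inv_ne_zero.2 (ENNReal.natCast_ne_top _)))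
    (hconn.uniformlyReaches_randomWalkKernel t) hτmeas hstop
  have hdynkin := hM.integral_comp_stopped_eq hX G.randomWalkKernel_ne_top hτmeas
    (fun n => ⟨_, (hstop n).trans (avoidUntil_eq_preimage_pathUpTo n).eventuallyEq⟩) hτint φ
  have hend : ∫ ω, φ (X (τ ω) ω) ∂P = φ t := by
    rw [integral_congr_ae (hτ.mono fun ω hω => congrArg φ hω.1), integral_const, probReal_univ,
      one_smul]
  have hstart : ∫ ω, φ (X 0 ω) ∂P = φ s := by
    rw [integral_congr_ae (h0.mono fun ω hω => congrArg φ hω), integral_const, probReal_univ,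
      one_smul]
  have hgen : ∀ᵐ ω ∂P, ∑ j ∈ Finset.range (τ ω), markovGenerator G.randomWalkKernel φ (X j ω) =
      -∑ j ∈ Finset.range (τ ω), l * φ (X j ω) / (G.degree (X j ω) : ℝ) := by
    filter_upwards [hτ] with ω hω
    rw [← Finset.sum_neg_distrib]
    exact Finset.sum_congr rfl fun j hj => G.markovGenerator_randomWalkKernel hpair.2
      (hconn.degree_pos_of_ne (hω.2 j (Finset.mem_range.1 hj))).ne'
  rw [hend, hstart, integral_congr_ae hgen, integral_neg] at hdynkin
  linarith
end

section
/- Let G be a finite tree on at least 2 vertices, let λ₂(G) be the second-smallest eigenvalue of its Laplacian matrix L = D − A, and let φ be an eigenvector of L with eigenvalue λ₂(G). Then every vertex at which φ attains its maximum over all vertices has degree 1, and every vertex at which φ attains its minimum over all vertices has degree 1. -/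
open Matrix

/-!
Let `v` maximise a Fiedler vector `φ` and put `M = φ v`, which is positive because `∑ φ = 0`.
If `v` is a cut vertex, `V ∖ {v}` splits into nonempty parts `B` and `C` with no edge between
them. The vector `y = (φ - M) · 1_B` has energy `yᵀ L y = λ₂ ‖y‖² + λ₂ M ∑ y`, since the only
neighbour of `B` outside `B` is `v`, where `φ - M` vanishes. The eigen-equation at a vertex of
`B` (resp. `C`) on which `φ ≡ M` would give `λ₂ M = 0`, so `φ < M` somewhere in `B` and in `C`;
hence `-n M < ∑ y < 0`. This contradicts the Rayleigh bound
`λ₂ (‖y‖² - (∑ y)² / n) ≤ yᵀ L y`, i.e. the bound for the part of `y` orthogonal to the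
constants. In a tree every vertex of degree at least two is a cut vertex, and minima of `φ` are
maxima of `-φ`.
-/

open Finset

namespace Matrix.IsHermitian

variable {n : Type*} [Fintype n] [DecidableEq n] {A : Matrix n n ℝ} (hA : A.IsHermitian)

theorem dotProduct_eq_sum_eigenvectorBasis (x y : n → ℝ) :
    x ⬝ᵥ y = ∑ i, (⇑(hA.eigenvectorBasis i) ⬝ᵥ x) * (⇑(hA.eigenvectorBasis i) ⬝ᵥ y) := by
  have := hA.eigenvectorBasis.sum_inner_mul_inner (WithLp.toLp 2 x) (WithLp.toLp 2 y)
  simp only [EuclideanSpace.inner_eq_star_dotProduct, star_trivial] at this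
  rw [dotProduct_comm, ← this]
  exact sum_congr rfl fun i _ => by rw [dotProduct_comm y]

theorem eigenvectorBasis_dotProduct_mulVec (i : n) (x : n → ℝ) :
    ⇑(hA.eigenvectorBasis i) ⬝ᵥ (A *ᵥ x) = hA.eigenvalues i * (⇑(hA.eigenvectorBasis i) ⬝ᵥ x) := by
  have hsymm : Aᵀ = A := by simpa using hA.eq
  rw [dotProduct_mulVec, ← mulVec_transpose, hsymm, hA.mulVec_eigenvectorBasis, smul_dotProduct,
    smul_eq_mul]

theorem exists_eigenvalue_mul_dotProduct_self_le {x : n → ℝ} (hx : x ≠ 0) :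
    ∃ i, ⇑(hA.eigenvectorBasis i) ⬝ᵥ x ≠ 0 ∧
      hA.eigenvalues i * (x ⬝ᵥ x) ≤ x ⬝ᵥ (A *ᵥ x) := by
  set c : n → ℝ := fun i => ⇑(hA.eigenvectorBasis i) ⬝ᵥ x
  have hnorm : x ⬝ᵥ x = ∑ i, c i * c i := hA.dotProduct_eq_sum_eigenvectorBasis x x
  have henergy : x ⬝ᵥ (A *ᵥ x) = ∑ i, hA.eigenvalues i * (c i * c i) := by
    rw [hA.dotProduct_eq_sum_eigenvectorBasis]
    exact sum_congr rfl fun i _ => by rw [hA.eigenvectorBasis_dotProduct_mulVec]; ring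
  have hsupp : ({i | c i ≠ 0} : Finset n).Nonempty := by
    by_contra! h
    refine hx (dotProduct_self_eq_zero.1 ?_)
    rw [hnorm]
    exact sum_eq_zero fun i _ => by simp [not_not.1 (filter_eq_empty_iff.1 h (mem_univ i))]
  obtain ⟨i₀, hi₀, hmin⟩ := exists_min_image _ hA.eigenvalues hsupp
  refine ⟨i₀, (mem_filter.1 hi₀).2, ?_⟩
  rw [hnorm, henergy, mul_sum]
  refine sum_le_sum fun i _ => ?_
  by_cases hci : c i = 0
  · simp [hci]
  · exact mul_le_mul_of_nonneg_right (hmin i (by simpa using hci)) (mul_self_nonneg _)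

end Matrix.IsHermitian

namespace SimpleGraph

section

variable {V : Type*} [Fintype V] [DecidableEq V] (G : SimpleGraph V) [DecidableRel G.Adj]

theorem sum_lapMatrix_mulVec {R : Type*} [CommRing R] (x : V → R) :
    ∑ v, (G.lapMatrix R *ᵥ x) v = 0 := by
  calc ∑ v, (G.lapMatrix R *ᵥ x) v = (fun _ => 1) ⬝ᵥ (G.lapMatrix R *ᵥ x) := by simp [dotProduct]
    _ = ((G.lapMatrix R)ᵀ *ᵥ fun _ => 1) ⬝ᵥ x := by rw [dotProduct_mulVec, mulVec_transpose]
    _ = 0 := by rw [(G.isSymm_lapMatrix R).eq, lapMatrix_mulVec_const_eq_zero, zero_dotProduct]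

theorem lapMatrix_mulVec_apply_eq_zero_of_forall_adj {R : Type*} [CommRing R] {x : V → R} {u : V}
    (h : ∀ w, G.Adj u w → x w = x u) : (G.lapMatrix R *ᵥ x) u = 0 := by
  rw [lapMatrix_mulVec_apply, sum_congr rfl fun w hw => h w ((G.mem_neighborFinset u w).1 hw),
    sum_const, card_neighborFinset_eq_degree, nsmul_eq_mul, sub_self]

variable {G}

theorem IsLapEigenpair.neg {l : ℝ} {φ : V → ℝ} (h : G.IsLapEigenpair l φ) :
    G.IsLapEigenpair l (-φ) :=
  ⟨neg_ne_zero.2 h.1, by rw [mulVec_neg, h.2, smul_neg]⟩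

theorem IsLapEigenpair.sum_eq_zero {l : ℝ} {φ : V → ℝ} (h : G.IsLapEigenpair l φ) (hl : l ≠ 0) :
    ∑ v, φ v = 0 := by
  have := G.sum_lapMatrix_mulVec φ
  rw [h.2] at this
  simpa [← mul_sum, hl] using this

theorem IsLapEigenpair.pos_of_isMax {l : ℝ} {φ : V → ℝ} {v : V} (h : G.IsLapEigenpair l φ)
    (hl : l ≠ 0) (hmax : ∀ w, φ w ≤ φ v) : 0 < φ v := by
  by_contra! hv
  exact h.1 (funext fun w => (sum_eq_zero_iff_of_nonpos fun w _ => (hmax w).trans hv).1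
    (h.sum_eq_zero hl) w (mem_univ w))

theorem Connected.exists_lapEigenpair_mul_dotProduct_self_le (hG : G.Connected) {x : V → ℝ}
    (hx : x ≠ 0) (hsum : ∑ v, x v = 0) :
    ∃ μ, 0 < μ ∧ (∃ ψ, G.IsLapEigenpair μ ψ) ∧ μ * (x ⬝ᵥ x) ≤ x ⬝ᵥ (G.lapMatrix ℝ *ᵥ x) := by
  have hA := G.isHermitian_lapMatrix ℝ
  obtain ⟨i, hi, hle⟩ := hA.exists_eigenvalue_mul_dotProduct_self_le hx
  have heig := hA.mulVec_eigenvectorBasis i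
  refine ⟨_, ((G.posSemidef_lapMatrix ℝ).eigenvalues_nonneg i).lt_of_ne fun h0 => hi ?_,
    ⟨_, fun h => hA.eigenvectorBasis.orthonormal.ne_zero i (congrArg (WithLp.toLp 2) h), heig⟩,
    hle⟩
  -- an eigenvector for `0` is constant, hence orthogonal to `x`
  have hconst := (G.lapMatrix_mulVec_eq_zero_iff_forall_reachable).1
    (by rw [heig, ← h0, zero_smul])
  obtain ⟨v₀⟩ := hG.nonempty
  simp only [dotProduct, fun v => hconst v v₀ (hG.preconnected v v₀), ← mul_sum, hsum, mul_zero]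

theorem IsSecondLapEigenvalue.mul_le_dotProduct_lapMatrix_mulVec {l : ℝ}
    (hl : G.IsSecondLapEigenvalue l) (hG : G.Connected) (x : V → ℝ) :
    l * (x ⬝ᵥ x - (∑ v, x v) ^ 2 / Fintype.card V) ≤ x ⬝ᵥ (G.lapMatrix ℝ *ᵥ x) := by
  have hn : (0 : ℝ) < Fintype.card V := by have := hG.nonempty; positivity
  set c := (∑ v, x v) / Fintype.card V
  set z : V → ℝ := fun v => x v - c
  have hzsum : ∑ v, z v = 0 := by
    simp only [z, sum_sub_distrib, sum_const, card_univ, nsmul_eq_mul, c]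
    field_simp; ring
  have hzz : z ⬝ᵥ z = x ⬝ᵥ x - (∑ v, x v) ^ 2 / Fintype.card V := by
    simp only [dotProduct, z, sub_mul, mul_sub, sum_sub_distrib, ← sum_mul, ← mul_sum, sum_const,
      card_univ, nsmul_eq_mul, c]
    field_simp; ring
  have hLz : G.lapMatrix ℝ *ᵥ z = G.lapMatrix ℝ *ᵥ x := by
    have : z = x - c • fun _ => 1 := by ext v; simp [z]
    rw [this, mulVec_sub, mulVec_smul, lapMatrix_mulVec_const_eq_zero, smul_zero, sub_zero]
  have hzLz : z ⬝ᵥ (G.lapMatrix ℝ *ᵥ z) = x ⬝ᵥ (G.lapMatrix ℝ *ᵥ x) := by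
    rw [hLz]
    simp only [dotProduct, z, sub_mul, sum_sub_distrib, ← mul_sum, sum_lapMatrix_mulVec, mul_zero,
      sub_zero]
  rw [← hzz, ← hzLz]
  rcases eq_or_ne z 0 with hz | hz
  · simp [hz]
  obtain ⟨μ, hμ, hψ, hle⟩ := hG.exists_lapEigenpair_mul_dotProduct_self_le hz hzsum
  exact (mul_le_mul_of_nonneg_right (hl.2.2 μ hμ hψ) (dotProduct_self_star_nonneg z)).trans hle

end

/-- `B` is a union of connected components of `G - v`. -/
def IsBranchAt {V : Type*} (G : SimpleGraph V) (v : V) (B : Set V) : Prop :=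
  v ∉ B ∧ ∀ ⦃w u⦄, w ∈ B → G.Adj w u → u ≠ v → u ∈ B

theorem IsBranchAt.compl {V : Type*} {G : SimpleGraph V} {v : V} {B : Set V}
    (hB : G.IsBranchAt v B) : G.IsBranchAt v {w | w ∉ B ∧ w ≠ v} :=
  ⟨fun h => h.2 rfl, fun _ _ hw hadj hu => ⟨fun huB => hw.1 (hB.2 huB hadj.symm hw.2), hu⟩⟩

namespace IsBranchAt

variable {V : Type*} [Fintype V] [DecidableEq V] {G : SimpleGraph V} [DecidableRel G.Adj]
  {v : V} {B : Set V}

theorem exists_ne_of_lapMatrix_mulVec_eq {l : ℝ} {φ : V → ℝ} (hB : G.IsBranchAt v B)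
    (heig : G.lapMatrix ℝ *ᵥ φ = l • φ) (hlφ : l * φ v ≠ 0) {u : V} (hu : u ∈ B) :
    ∃ w ∈ B, φ w ≠ φ v := by
  by_contra! h
  have hzero := G.lapMatrix_mulVec_apply_eq_zero_of_forall_adj (x := φ) (u := u) fun w hw => by
    rw [h u hu]
    rcases eq_or_ne w v with rfl | hwv
    · rfl
    · exact h w (hB.2 hu hw hwv)
  rw [heig, Pi.smul_apply, smul_eq_mul, h u hu] at hzero
  exact hlφ hzero

theorem lapMatrix_mulVec_indicator_apply {φ : V → ℝ} (hB : G.IsBranchAt v B) {w : V}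
    (hw : w ∈ B) :
    (G.lapMatrix ℝ *ᵥ B.indicator fun u => φ u - φ v) w = (G.lapMatrix ℝ *ᵥ φ) w := by
  have hnbr : ∀ u ∈ G.neighborFinset w, B.indicator (fun u => φ u - φ v) u = φ u - φ v := by
    intro u hu
    rcases eq_or_ne u v with rfl | huv
    · simp [hB.1]
    · exact Set.indicator_of_mem (hB.2 hw ((G.mem_neighborFinset w u).1 hu) huv) _
  rw [lapMatrix_mulVec_apply, lapMatrix_mulVec_apply, sum_congr rfl hnbr,
    Set.indicator_of_mem hw, sum_sub_distrib, sum_const, card_neighborFinset_eq_degree]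
  simp only [nsmul_eq_mul]
  ring

theorem dotProduct_lapMatrix_mulVec_indicator {l : ℝ} {φ : V → ℝ} (hB : G.IsBranchAt v B)
    (heig : G.lapMatrix ℝ *ᵥ φ = l • φ) {y : V → ℝ} (hy : y = B.indicator fun u => φ u - φ v) :
    y ⬝ᵥ (G.lapMatrix ℝ *ᵥ y) = l * (y ⬝ᵥ y) + l * φ v * ∑ w, y w := by
  have hpoint : ∀ w, y w * (G.lapMatrix ℝ *ᵥ y) w = l * (y w * y w) + l * φ v * y w := by
    intro w
    by_cases hw : w ∈ B
    · rw [hy, hB.lapMatrix_mulVec_indicator_apply hw, heig, Pi.smul_apply, smul_eq_mul,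
        Set.indicator_of_mem hw]
      ring
    · simp [hy, Set.indicator_of_notMem hw]
  simp only [dotProduct, hpoint, sum_add_distrib, mul_sum]

end IsBranchAt

theorem IsAcyclic.exists_isBranchAt {V : Type*} {G : SimpleGraph V} (hG : G.IsAcyclic)
    {v u₁ u₂ : V} (h₁ : G.Adj v u₁) (h₂ : G.Adj v u₂) (hne : u₁ ≠ u₂) :
    ∃ B, G.IsBranchAt v B ∧ u₁ ∈ B ∧ u₂ ∉ B := by
  set H := G.deleteEdges {s(v, u₁)}
  have hbridge : ¬ H.Reachable v u₁ := isBridge_iff.1 (isAcyclic_iff_forall_adj_isBridge.1 hG h₁)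
  have hvB : v ∉ {w | H.Reachable u₁ w} := fun h => hbridge h.symm
  refine ⟨{w | H.Reachable u₁ w}, ⟨hvB, fun w u hw hadj hu => ?_⟩, Reachable.refl u₁, fun h => ?_⟩
  · have hwv : w ≠ v := fun h => hvB (h ▸ hw)
    exact Reachable.trans hw (Adj.reachable (by simp [H, hadj, hwv, hu]))
  · have hvu₂ : H.Adj v u₂ := by simp [H, h₂, hne.symm, G.ne_of_adj h₁]
    exact hbridge (hvu₂.reachable.trans h.symm)

variable {V : Type*} [Fintype V] [DecidableEq V] {G : SimpleGraph V} [DecidableRel G.Adj]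

/-- A maximum point `v` of a Fiedler vector of a connected graph is not a cut vertex. -/
theorem IsSecondLapEigenvalue.mem_of_isBranchAt_of_isMax {l : ℝ} {φ : V → ℝ} {v : V}
    {B : Set V} (hl : G.IsSecondLapEigenvalue l) (hG : G.Connected)
    (hpair : G.IsLapEigenpair l φ) (hmax : ∀ w, φ w ≤ φ v) (hB : G.IsBranchAt v B)
    (hBne : B.Nonempty) {u : V} (huv : u ≠ v) : u ∈ B := by
  have hl₀ : 0 < l := hl.2.1
  have hM := hpair.pos_of_isMax hl₀.ne' hmax
  have hlM : l * φ v ≠ 0 := (mul_pos hl₀ hM).ne'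
  by_contra huB
  obtain ⟨w₁, hw₁B, hw₁⟩ := hB.exists_ne_of_lapMatrix_mulVec_eq hpair.2 hlM hBne.some_mem
  obtain ⟨w₂, hw₂B, hw₂⟩ := hB.compl.exists_ne_of_lapMatrix_mulVec_eq hpair.2 hlM ⟨huB, huv⟩
  set y := B.indicator fun u => φ u - φ v with hy
  set s := ∑ w, y w
  have hs_neg : s < 0 := by
    refine sum_neg' (fun w _ => ?_) ⟨w₁, mem_univ w₁, ?_⟩
    · by_cases hw : w ∈ B <;> simp [y, hw, hmax w]
    · simpa [y, hw₁B] using (hmax w₁).lt_of_ne hw₁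
  have hs_lower : -(Fintype.card V * φ v) < s := by
    calc -(Fintype.card V * φ v) = ∑ w, (φ w - φ v) := by
          simp [sum_sub_distrib, hpair.sum_eq_zero hl₀.ne']
      _ < s := by
        refine sum_lt_sum (fun w _ => ?_) ⟨w₂, mem_univ w₂, ?_⟩
        · by_cases hw : w ∈ B <;> simp [y, hw, hmax w]
        · simpa [y, hw₂B.1] using (hmax w₂).lt_of_ne hw₂
  have hrayleigh := hl.mul_le_dotProduct_lapMatrix_mulVec hG y
  rw [hB.dotProduct_lapMatrix_mulVec_indicator hpair.2 hy] at hrayleigh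
  have hn : (0 : ℝ) < Fintype.card V := by have := hG.nonempty; positivity
  have hquad : 0 ≤ l * (s * (s + Fintype.card V * φ v) / Fintype.card V) := by
    have : l * (s * (s + Fintype.card V * φ v) / Fintype.card V) =
        l * (s ^ 2 / Fintype.card V) + l * φ v * s := by
      field_simp
    linarith
  have hprod : s * (s + Fintype.card V * φ v) < 0 := mul_neg_of_neg_of_pos hs_neg (by linarith)
  exact (mul_neg_of_pos_of_neg hl₀ (div_neg_of_neg_of_pos hprod hn)).not_ge hquad

theorem IsSecondLapEigenvalue.degree_eq_one_of_isMax [Nontrivial V] {l : ℝ} {φ : V → ℝ} {v : V}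
    (hl : G.IsSecondLapEigenvalue l) (hT : G.IsTree) (hpair : G.IsLapEigenpair l φ)
    (hmax : ∀ w, φ w ≤ φ v) : G.degree v = 1 := by
  refine le_antisymm ?_ (hT.connected.preconnected.degree_pos_of_nontrivial v)
  by_contra! h
  rw [← card_neighborFinset_eq_degree] at h
  obtain ⟨u₁, hu₁, u₂, hu₂, hne⟩ := one_lt_card.1 h
  rw [mem_neighborFinset] at hu₁ hu₂
  obtain ⟨B, hB, hu₁B, hu₂B⟩ := hT.isAcyclic.exists_isBranchAt hu₁ hu₂ hne
  exact hu₂B (hl.mem_of_isBranchAt_of_isMax hT.connected hpair hmax hB ⟨u₁, hu₁B⟩ hu₂.ne')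

end SimpleGraph

/-- In a finite tree on at least two vertices, every vertex at which a Fiedler vector attains
its maximum, and every vertex at which it attains its minimum, has degree 1. -/
theorem fiedler_extrema_at_leaves {V : Type*} [Fintype V] [DecidableEq V]
    (G : SimpleGraph V) [DecidableRel G.Adj] (hT : G.IsTree) (hcard : 2 ≤ Fintype.card V)
    (l : ℝ) (hl : G.IsSecondLapEigenvalue l) (φ : V → ℝ) (hpair : G.IsLapEigenpair l φ) :
    (∀ v : V, (∀ w : V, φ w ≤ φ v) → G.degree v = 1) ∧
      (∀ v : V, (∀ w : V, φ v ≤ φ w) → G.degree v = 1) := by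
  have : Nontrivial V := Fintype.one_lt_card_iff_nontrivial.1 hcard
  exact ⟨fun v hv => hl.degree_eq_one_of_isMax hT hpair hv,
    fun v hv => hl.degree_eq_one_of_isMax hT hpair.neg fun w => neg_le_neg (hv w)⟩
end

section
/- Let G be a finite tree on at least 2 vertices. Then the second-smallest eigenvalue of its Laplacian matrix L = D − A satisfies λ₂(G) ≤ 10 / diam(G)². -/
open Matrix
/-!
The second eigenvalue is at most the Rayleigh quotient of any nonzero vector orthogonal to the
constants. Fix a diametral geodesic `x = v₀, …, v_d = y` of the tree and send each vertex `v` to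
`(d + d(x,v) - d(v,y)) / 2`, the position of its foot on the geodesic: every edge off the geodesic
is collapsed. Pulling back the first Neumann eigenvector `k ↦ cos ((k + 1/2) π / (d + 1))` of the
path (and removing its mean) gives a Rayleigh quotient of at most
`2 - 2 cos (π / (d + 1)) ≤ π² / (d + 1)² < 10 / d²`.
-/

open Finset Real

/-- Summation by parts for a solution of `g (k - 1) + g (k + 1) = 2 c g k` with the Neumann
conditions `g (-1) = g 0` (written as `h₀`) and `g (d + 1) = g d`. -/
theorem sum_range_sq_sub_succ_of_recurrence (g : ℕ → ℝ) (c : ℝ) {d : ℕ}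
    (hrec : ∀ k, g k + g (k + 2) = 2 * c * g (k + 1)) (h₀ : g 1 = (2 * c - 1) * g 0)
    (hd : g (d + 1) = g d) :
    ∑ k ∈ range d, (g k - g (k + 1)) ^ 2 = (2 - 2 * c) * ∑ k ∈ range (d + 1), g k ^ 2 := by
  have key (m : ℕ) : ∑ k ∈ range m, (g k - g (k + 1)) ^ 2 =
      (2 - 2 * c) * ∑ k ∈ range (m + 1), g k ^ 2 - g m * (g m - g (m + 1)) := by
    induction m with
    | zero =>
      simp only [range_zero, sum_empty, zero_add, sum_range_one]
      linear_combination -g 0 * h₀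
    | succ m ih =>
      rw [sum_range_succ, ih, sum_range_succ _ (m + 1)]
      linear_combination -g (m + 1) * hrec m
  rw [key, hd, sub_self, mul_zero, sub_zero]

theorem sum_range_cos_add_half_mul_pi_div (n : ℕ) :
    ∑ k ∈ range n, cos ((k + 1 / 2) * (π / n)) = 0 := by
  have hrefl : ∑ k ∈ range n, cos ((k + 1 / 2) * (π / n)) =
      ∑ k ∈ range n, -cos ((k + 1 / 2) * (π / n)) := by
    rw [← sum_range_reflect]
    refine sum_congr rfl fun k hk => ?_
    have hkn : k < n := mem_range.mp hk
    have hn : (n : ℝ) ≠ 0 := Nat.cast_ne_zero.mpr (by omega)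
    rw [Nat.cast_sub (by omega), Nat.cast_sub (by omega), ← cos_pi_sub]
    congr 1
    field_simp
    ring
  rw [sum_neg_distrib] at hrefl
  linarith

theorem sum_range_sq_cos_sub_cos (d : ℕ) :
    ∑ k ∈ range d,
        (cos ((k + 1 / 2) * (π / (d + 1))) - cos ((k + 1 + 1 / 2) * (π / (d + 1)))) ^ 2 =
      (2 - 2 * cos (π / (d + 1))) *
        ∑ k ∈ range (d + 1), cos ((k + 1 / 2) * (π / (d + 1))) ^ 2 := by
  set θ := π / (d + 1) with hθ
  have hcos (t : ℝ) : cos ((t - 1) * θ) + cos ((t + 1) * θ) = 2 * cos θ * cos (t * θ) := by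
    rw [cos_add_cos, show ((t - 1) * θ + (t + 1) * θ) / 2 = t * θ by ring,
      show ((t - 1) * θ - (t + 1) * θ) / 2 = -θ by ring, cos_neg]
    ring
  have hrec (k : ℕ) : cos ((k + 1 / 2) * θ) + cos ((k + 2 + 1 / 2) * θ) =
      2 * cos θ * cos ((k + 1 + 1 / 2) * θ) := by
    convert hcos (k + 3 / 2) using 3 <;> ring
  have h₀ : cos ((1 + 1 / 2) * θ) = (2 * cos θ - 1) * cos ((0 + 1 / 2) * θ) := by
    have := hcos (1 / 2)
    rw [show (1 / 2 - 1 : ℝ) * θ = -(1 / 2 * θ) by ring, cos_neg] at this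
    norm_num at this ⊢
    linear_combination this
  have hd : cos ((d + 1 + 1 / 2) * θ) = cos ((d + 1 / 2) * θ) := by
    have hπ : (d + 1 : ℝ) * θ = π := by rw [hθ]; field_simp
    rw [show ((d : ℝ) + 1 + 1 / 2) * θ = θ / 2 + π by linear_combination hπ,
      show ((d : ℝ) + 1 / 2) * θ = π - θ / 2 by linear_combination hπ, cos_pi_sub, cos_add_pi]
  simpa using sum_range_sq_sub_succ_of_recurrence (fun k : ℕ => cos ((k + 1 / 2) * θ)) (cos θ)
    (fun k => by push_cast; exact hrec k) (by push_cast; exact h₀) (by push_cast; exact hd)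

theorem two_sub_two_cos_pi_div_le {d : ℝ} (hd : 0 < d) :
    2 - 2 * cos (π / (d + 1)) ≤ 10 / d ^ 2 := by
  have h₁ : 2 - 2 * cos (π / (d + 1)) ≤ (π / (d + 1)) ^ 2 := by
    linarith [one_sub_sq_div_two_le_cos (x := π / (d + 1))]
  have h₂ : (π / (d + 1)) ^ 2 ≤ (π / d) ^ 2 := by
    gcongr
    linarith
  have h₃ : (π / d) ^ 2 ≤ 10 / d ^ 2 := by
    rw [div_pow]
    gcongr
    nlinarith [pi_lt_d2, pi_pos]
  linarith

namespace SimpleGraph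

variable {V : Type*} {G : SimpleGraph V}

section Walk
variable {x y u v w : V}

theorem Walk.dist_add_dist_of_mem_support {p : G.Walk x y} (hp : p.length = G.dist x y)
    (hv : v ∈ p.support) : G.dist x v + G.dist v y = G.dist x y := by
  classical
  have := (p.takeUntil v hv).reachable.dist_triangle_left y
  have := dist_le (p.takeUntil v hv)
  have := dist_le (p.dropUntil v hv)
  have : (p.takeUntil v hv).length + (p.dropUntil v hv).length = p.length := by
    rw [← length_append, take_spec]
  omega

theorem Walk.getVert_dist_of_mem_support {p : G.Walk x y} (hp : p.length = G.dist x y)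
    (hv : v ∈ p.support) : p.getVert (G.dist x v) = v := by
  classical
  have := dist_add_dist_of_mem_support hp hv
  have := dist_le (p.takeUntil v hv)
  have := dist_le (p.dropUntil v hv)
  have : (p.takeUntil v hv).length + (p.dropUntil v hv).length = p.length := by
    rw [← length_append, take_spec]
  convert p.getVert_length_takeUntil hv using 2
  omega

theorem Walk.dist_getVert {p : G.Walk x y} (hp : p.length = G.dist x y) {k : ℕ}
    (hk : k ≤ p.length) : G.dist x (p.getVert k) = k := by
  have := dist_add_dist_of_mem_support hp (p.getVert_mem_support k)
  have h₁ := dist_le (p.take k)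
  have h₂ := dist_le (p.drop k)
  rw [take_length] at h₁
  rw [drop_length] at h₂
  omega

/-- The edge `uw` is a bridge separating `x` (on the side of `u`) from `y` (on the side of `w`). -/
theorem IsAcyclic.mem_edges_of_dist_lt (hG : G.IsAcyclic) (huw : G.Adj u w)
    (hx : G.dist x u < G.dist x w) (hy : G.dist w y < G.dist u y) (p : G.Walk x y) :
    s(u, w) ∈ p.edges := by
  classical
  obtain ⟨p₁, hp₁⟩ := ((Reachable.of_dist_ne_zero (by omega : G.dist x w ≠ 0)).trans
    huw.symm.reachable).exists_walk_length_eq_dist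
  obtain ⟨p₃, hp₃⟩ := (huw.symm.reachable.trans
    (Reachable.of_dist_ne_zero (by omega : G.dist u y ≠ 0))).exists_walk_length_eq_dist
  have hw : w ∉ p₁.support := fun hw => by
    have := dist_le (p₁.takeUntil w hw)
    have := p₁.length_takeUntil_le_length hw
    omega
  have hu : u ∉ p₃.support := fun hu => by
    have := dist_le (p₃.dropUntil u hu)
    have := p₃.length_dropUntil_le_length hu
    omega
  have := isBridge_iff_forall_walk_mem_edges.mp (isAcyclic_iff_forall_adj_isBridge.mp hG huw)
    (p₁.reverse.append (p.append p₃.reverse))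
  simp only [Walk.edges_append, Walk.edges_reverse, List.mem_append, List.mem_reverse] at this
  rcases this with h | h | h
  · exact absurd (p₁.snd_mem_support_of_mem_edges h) hw
  · exact h
  · exact absurd (p₃.fst_mem_support_of_mem_edges h) hu

end Walk

theorem exists_isLapEigenpair_le_of_sum_eq_zero [Fintype V] [DecidableEq V] [DecidableRel G.Adj]
    (hc : G.Connected) {ψ : V → ℝ} (hψ : ψ ≠ 0) (hsum : ∑ v, ψ v = 0) {R : ℝ}
    (hR : ψ ⬝ᵥ (G.lapMatrix ℝ *ᵥ ψ) ≤ R * (ψ ⬝ᵥ ψ)) :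
    ∃ μ, 0 < μ ∧ μ ≤ R ∧ ∃ φ, G.IsLapEigenpair μ φ := by
  have hL := (posSemidef_lapMatrix ℝ G).isHermitian
  set b := hL.eigenvectorBasis
  set μ := hL.eigenvalues
  set c : V → ℝ := fun k => b k ⬝ᵥ ψ
  have hb (k : V) : G.lapMatrix ℝ *ᵥ b k = μ k • b k := hL.mulVec_eigenvectorBasis k
  have parseval (φ : V → ℝ) : ∑ k, c k * (b k ⬝ᵥ φ) = ψ ⬝ᵥ φ := by
    simpa [EuclideanSpace.inner_eq_star_dotProduct, c, dotProduct_comm] using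
      b.sum_inner_mul_inner (WithLp.toLp 2 ψ) (WithLp.toLp 2 φ)
  have hnorm : ψ ⬝ᵥ ψ = ∑ k, c k ^ 2 := by
    simp_rw [sq]
    exact (parseval ψ).symm
  have hquad : ψ ⬝ᵥ (G.lapMatrix ℝ *ᵥ ψ) = ∑ k, μ k * c k ^ 2 := by
    rw [← parseval]
    refine sum_congr rfl fun k _ => ?_
    rw [dotProduct_mulVec, ← mulVec_transpose, (isSymm_lapMatrix ℝ G).eq, hb, smul_dotProduct,
      smul_eq_mul]
    ring
  have hker (k : V) (hk : μ k = 0) : c k = 0 := by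
    have hconst : ∀ i j, G.Reachable i j → b k i = b k j :=
      (lapMatrix_mulVec_eq_zero_iff_forall_reachable G).mp (by rw [hb, hk, zero_smul])
    obtain ⟨v₀⟩ := hc.nonempty
    calc c k = ∑ v, b k v₀ * ψ v := sum_congr rfl fun v _ => by rw [hconst v v₀ (hc v v₀)]
      _ = 0 := by rw [← mul_sum, hsum, mul_zero]
  obtain ⟨k, hck, hkR⟩ : ∃ k, c k ≠ 0 ∧ μ k ≤ R := by
    by_contra! h
    obtain ⟨k₀, hk₀⟩ : ∃ k, c k ≠ 0 := by
      by_contra! h0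
      exact hψ (by simpa [h0, dotProduct_self_eq_zero] using hnorm)
    refine hR.not_gt ?_
    rw [hquad, hnorm, mul_sum]
    refine sum_lt_sum (fun k _ => ?_) ⟨k₀, mem_univ _, ?_⟩
    · by_cases hk : c k = 0
      · simp [hk]
      · exact mul_le_mul_of_nonneg_right (h k hk).le (sq_nonneg _)
    · exact mul_lt_mul_of_pos_right (h k₀ hk₀) (by positivity)
  have hμ : 0 < μ k :=
    ((posSemidef_lapMatrix ℝ G).eigenvalues_nonneg k).lt_of_ne' (mt (hker k) hck)
  exact ⟨μ k, hμ, hkR, b k, fun h => hck (by simp [c, h]), hb k⟩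

variable {d : ℕ}

/-- A retraction of `G` onto a path `vert 0, …, vert d`: every edge of `G` other than the
`vert k — vert (k + 1)` is collapsed by `proj`. -/
structure PathProjection (G : SimpleGraph V) (d : ℕ) where
  proj : V → ℝ
  vert : ℕ → V
  proj_vert : ∀ k ≤ d, proj (vert k) = k
  exists_eq_vert_of_adj : ∀ u w, G.Adj u w → proj u < proj w →
    ∃ k < d, u = vert k ∧ w = vert (k + 1)

namespace PathProjection
variable [Fintype V] (P : G.PathProjection d)

theorem sum_range_le_sum {φ : ℝ → ℝ} (hφ : ∀ t, 0 ≤ φ t) :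
    ∑ k ∈ range (d + 1), φ k ≤ ∑ v, φ (P.proj v) := by
  classical
  have hvert (k : ℕ) (hk : k ∈ range (d + 1)) : P.proj (P.vert k) = k :=
    P.proj_vert k (Nat.lt_succ_iff.mp (mem_range.mp hk))
  have hinj : Set.InjOn P.vert (range (d + 1)) := fun i hi j hj h => by
    exact_mod_cast (hvert i hi).symm.trans (h ▸ hvert j hj)
  calc ∑ k ∈ range (d + 1), φ k = ∑ k ∈ range (d + 1), φ (P.proj (P.vert k)) :=
        sum_congr rfl fun k hk => by rw [hvert k hk]
    _ = ∑ v ∈ (range (d + 1)).image P.vert, φ (P.proj v) :=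
        (sum_image (f := fun v => φ (P.proj v)) hinj).symm
    _ ≤ ∑ v, φ (P.proj v) := sum_le_univ_sum_of_nonneg fun v => hφ _

theorem sum_range_sq_le_sum_sq_sub {g : ℝ → ℝ} (hg : ∑ k ∈ range (d + 1), g k = 0)
    (m : ℝ) :
    ∑ k ∈ range (d + 1), g k ^ 2 ≤ ∑ v, (g (P.proj v) - m) ^ 2 :=
  calc ∑ k ∈ range (d + 1), g k ^ 2 ≤ ∑ k ∈ range (d + 1), g k ^ 2 + (d + 1) * m ^ 2 := by
        have : 0 ≤ ((d : ℝ) + 1) * m ^ 2 := by positivity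
        linarith
    _ = ∑ k ∈ range (d + 1), (g k - m) ^ 2 := by
        simp only [sub_sq, sum_add_distrib, sum_sub_distrib, ← sum_mul, ← mul_sum, hg]
        simp
    _ ≤ ∑ v, (g (P.proj v) - m) ^ 2 := P.sum_range_le_sum fun t => sq_nonneg (g t - m)

theorem sum_adj_sq_sub_le [DecidableRel G.Adj] (g : ℝ → ℝ) :
    ∑ i, ∑ j, (if G.Adj i j then (g (P.proj i) - g (P.proj j)) ^ 2 else 0) ≤
      2 * ∑ k ∈ range d, (g k - g (k + 1)) ^ 2 := by
  classical
  set F : V → V → ℝ := fun i j =>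
    if G.Adj i j ∧ P.proj i < P.proj j then (g (P.proj i) - g (P.proj j)) ^ 2 else 0 with hF
  have hsplit (i j : V) :
      (if G.Adj i j then (g (P.proj i) - g (P.proj j)) ^ 2 else 0) = F i j + F j i := by
    rcases lt_trichotomy (P.proj i) (P.proj j) with h | h | h
    · simp [hF, h, h.not_gt, G.adj_comm]
    · simp [hF, h]
    · simp only [hF, h, h.not_gt, G.adj_comm j i, and_false, and_true, if_false, zero_add]
      split_ifs <;> ring
  have hpath : ∑ i, ∑ j, F i j ≤ ∑ k ∈ range d, (g k - g (k + 1)) ^ 2 := by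
    have hsupp : ∀ p ∈ univ, p ∉ (range d).image (fun k => (P.vert k, P.vert (k + 1))) →
        F p.1 p.2 = 0 := by
      intro p _ hp
      by_contra hne
      obtain ⟨hadj, hlt⟩ := (ite_ne_right_iff.mp hne).1
      obtain ⟨k, hk, h₁, h₂⟩ := P.exists_eq_vert_of_adj _ _ hadj hlt
      exact hp (mem_image.mpr ⟨k, mem_range.mpr hk, Prod.ext h₁.symm h₂.symm⟩)
    rw [← Fintype.sum_prod_type', ← sum_subset (subset_univ _) hsupp]
    refine (sum_image_le_of_nonneg fun p _ => by positivity).trans (sum_le_sum fun k hk => ?_)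
    have hk := mem_range.mp hk
    simp only [hF]
    split_ifs
    · rw [P.proj_vert k hk.le, P.proj_vert (k + 1) hk, Nat.cast_succ]
    · positivity
  calc ∑ i, ∑ j, (if G.Adj i j then (g (P.proj i) - g (P.proj j)) ^ 2 else 0)
      = ∑ i, ∑ j, F i j + ∑ i, ∑ j, F j i := by simp only [hsplit, sum_add_distrib]
    _ = 2 * ∑ i, ∑ j, F i j := by rw [sum_comm (f := fun i j => F j i)]; ring
    _ ≤ 2 * ∑ k ∈ range d, (g k - g (k + 1)) ^ 2 := by linarith

end PathProjection

theorem PathProjection.exists_isLapEigenpair_le [Fintype V] [DecidableEq V] [DecidableRel G.Adj]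
    (P : G.PathProjection d) (hc : G.Connected) (hd : 0 < d) :
    ∃ μ, 0 < μ ∧ μ ≤ 2 - 2 * cos (π / (d + 1)) ∧ ∃ φ, G.IsLapEigenpair μ φ := by
  have : Nonempty V := hc.nonempty
  set g : ℝ → ℝ := fun t => cos ((t + 1 / 2) * (π / (d + 1))) with hg
  set m : ℝ := (∑ v, g (P.proj v)) / Fintype.card V
  set ψ : V → ℝ := fun v => g (P.proj v) - m
  have hsum : ∑ v, ψ v = 0 := by
    simp only [ψ, m, sum_sub_distrib, sum_const, card_univ, nsmul_eq_mul]
    field_simp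
    ring
  have hg₀ : ∑ k ∈ range (d + 1), g k = 0 := by
    simpa [hg] using sum_range_cos_add_half_mul_pi_div (d + 1)
  have hden : ∑ k ∈ range (d + 1), g k ^ 2 ≤ ψ ⬝ᵥ ψ :=
    (P.sum_range_sq_le_sum_sq_sub hg₀ m).trans_eq (by simp only [dotProduct, ψ, sq])
  have hpos : 0 < ∑ k ∈ range (d + 1), g k ^ 2 := by
    have hθ : 0 < π / (d + 1) := by positivity
    have hθπ : π / (d + 1) < π :=
      div_lt_self pi_pos (by linarith [(Nat.cast_pos (α := ℝ)).mpr hd])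
    have : 0 < g (0 : ℕ) :=
      cos_pos_of_mem_Ioo ⟨by push_cast; linarith, by push_cast; linarith⟩
    exact (pow_pos this 2).trans_le <| single_le_sum (f := fun k : ℕ => g k ^ 2)
      (fun k _ => sq_nonneg (g k)) (mem_range.mpr d.succ_pos)
  have hnum : ψ ⬝ᵥ (G.lapMatrix ℝ *ᵥ ψ) ≤
      (2 - 2 * cos (π / (d + 1))) * ∑ k ∈ range (d + 1), g k ^ 2 := by
    rw [← toLinearMap₂'_apply', lapMatrix_toLinearMap₂']
    simp only [ψ, sub_sub_sub_cancel_right]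
    have := P.sum_adj_sq_sub_le g
    simp only [hg] at this ⊢
    linarith [sum_range_sq_cos_sub_cos d]
  have hψ : ψ ≠ 0 := fun h => by
    simp [h] at hden
    linarith
  have hR : 0 ≤ 2 - 2 * cos (π / (d + 1)) := by linarith [cos_le_one (π / (d + 1))]
  exact exists_isLapEigenpair_le_of_sum_eq_zero hc hψ hsum
    (hnum.trans (mul_le_mul_of_nonneg_left hden hR))

/-- `proj v` is the distance from `x` to the foot of `v` on the geodesic from `x` to `y`. -/
theorem IsTree.nonempty_pathProjection (hT : G.IsTree) (x y : V) :
    Nonempty (G.PathProjection (G.dist x y)) := by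
  obtain ⟨p, hp⟩ := hT.connected.exists_walk_length_eq_dist x y
  refine ⟨⟨fun v => ((G.dist x y : ℝ) + G.dist x v - G.dist v y) / 2, p.getVert,
    fun k hk => ?_, fun u w huw hlt => ?_⟩⟩
  · have h₁ := p.dist_getVert hp (hp ▸ hk)
    have h₂ := p.dist_add_dist_of_mem_support hp (p.getVert_mem_support k)
    rw [h₁] at h₂
    rw [← h₂, h₁]
    push_cast
    ring
  · have hlt' : (G.dist x u : ℤ) - G.dist u y < G.dist x w - G.dist w y := by
      have : (G.dist x u : ℝ) - G.dist u y < G.dist x w - G.dist w y := by linarith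
      exact_mod_cast this
    have hx := hT.dist_eq_dist_add_one_of_adj x huw
    have hy := hT.dist_eq_dist_add_one_of_adj y huw
    rw [dist_comm (u := y), dist_comm (u := y)] at hy
    -- `uw` leads away from `x` and towards `y`, so it lies on every walk from `x` to `y`.
    have hmem := hT.isAcyclic.mem_edges_of_dist_lt huw (by omega) (by omega) p
    have hu := p.fst_mem_support_of_mem_edges hmem
    have hw := p.snd_mem_support_of_mem_edges hmem
    have := p.dist_add_dist_of_mem_support hp hu
    refine ⟨G.dist x u, by omega, (p.getVert_dist_of_mem_support hp hu).symm, ?_⟩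
    rw [← p.getVert_dist_of_mem_support hp hw]
    congr 1
    omega

end SimpleGraph

/-- For a finite tree on at least 2 vertices, `λ₂(G) ≤ 10 / diam(G)²`. -/
theorem secondLapEigenvalue_le_of_isTree {V : Type*} [Fintype V] [DecidableEq V]
    (G : SimpleGraph V) [DecidableRel G.Adj] (hT : G.IsTree) (hcard : 2 ≤ Fintype.card V)
    (l : ℝ) (hl : G.IsSecondLapEigenvalue l) :
    l ≤ 10 / (G.diam : ℝ) ^ 2 := by
  have : Nontrivial V := Fintype.one_lt_card_iff_nontrivial.mp hcard
  have hd : 0 < G.diam :=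
    Nat.pos_of_ne_zero (SimpleGraph.connected_iff_diam_ne_zero.mp hT.connected)
  obtain ⟨x, y, hxy⟩ := G.exists_dist_eq_diam
  obtain ⟨P⟩ := hT.nonempty_pathProjection x y
  obtain ⟨μ, hμ, hμle, hμeig⟩ := P.exists_isLapEigenpair_le hT.connected (hxy ▸ hd)
  calc l ≤ μ := hl.2.2 μ hμ hμeig
    _ ≤ 2 - 2 * cos (π / (G.diam + 1)) := by rwa [← hxy]
    _ ≤ 10 / (G.diam : ℝ) ^ 2 := two_sub_two_cos_pi_div_le (by exact_mod_cast hd)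
end

section
/- Let G be a finite connected simple graph on n ≥ 2 vertices, let λ > 0 be a nonzero eigenvalue of the Laplacian matrix L = D − A, and let φ be a corresponding eigenvector normalized so that Σ_{v ∈ V} φ(v)² = 1. Then max_{v ∈ V} |φ(v)| ≤ √(λ · diam(G)). -/
/-!
As `φ ⊥ 1`, some vertex `u` has `φ u * φ v ≤ 0`, so `φ v ^ 2 ≤ (φ v - φ u) ^ 2`. Telescoping along a
shortest path from `v` to `u` and Cauchy–Schwarz bound this by `diam G` times the sum of
`(φ a - φ b) ^ 2` over the edges of the path. These edges are distinct, so that sum is at most the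
sum over all edges, which is `λ ‖φ‖² = λ` by the Rayleigh identity.
-/

open Matrix

open Finset

namespace SimpleGraph
variable {V : Type*} {G : SimpleGraph V}

namespace Walk
variable {u v : V} {p : G.Walk u v}

theorem sum_darts_sub {M : Type*} [AddCommGroup M] (f : V → M) (p : G.Walk u v) :
    (p.darts.map fun d => f d.fst - f d.snd).sum = f u - f v := by
  induction p with
  | nil => simp
  | cons h q ih =>
    simp only [darts_cons, List.map_cons, List.sum_cons, ih]
    abel

theorem IsTrail.nodup_darts (hp : p.IsTrail) : p.darts.Nodup :=
  hp.edges_nodup.of_map Dart.edge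

theorem IsTrail.nodup_darts_append_map_symm (hp : p.IsTrail) :
    (p.darts ++ p.darts.map Dart.symm).Nodup := by
  refine List.nodup_append.2
    ⟨hp.nodup_darts, hp.nodup_darts.map Dart.symm_involutive.injective, ?_⟩
  rintro d hd _ hd' rfl
  obtain ⟨e, he, rfl⟩ := List.mem_map.1 hd'
  have hde : e.symm = e :=
    List.inj_on_of_nodup_map hp.edges_nodup hd he (Dart.edge_symm e)
  exact e.symm_ne hde

theorem IsTrail.sq_sub_le_length_mul_sum {R : Type*} [CommRing R] [LinearOrder R]
    [IsStrictOrderedRing R] (hp : p.IsTrail) (φ : V → R) :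
    (φ u - φ v) ^ 2 ≤ p.length * (p.darts.map fun d => (φ d.fst - φ d.snd) ^ 2).sum := by
  classical
  rw [← p.sum_darts_sub φ, ← List.sum_toFinset _ hp.nodup_darts,
    ← List.sum_toFinset _ hp.nodup_darts, ← p.length_darts,
    ← List.toFinset_card_of_nodup hp.nodup_darts]
  exact sq_sum_le_card_mul_sum_sq

theorem IsTrail.two_mul_sum_darts_le [Fintype V] [DecidableRel G.Adj] {R : Type*} [Semiring R]
    [PartialOrder R] [IsOrderedRing R] (hp : p.IsTrail) {f : V → V → R} (hsymm : ∀ a b, f a b = f b a) (hf : ∀ a b, 0 ≤ f a b) :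
    2 * (p.darts.map fun d => f d.fst d.snd).sum ≤ ∑ d : G.Dart, f d.fst d.snd := by
  classical
  calc 2 * (p.darts.map fun d => f d.fst d.snd).sum
      = ((p.darts ++ p.darts.map Dart.symm).map fun d => f d.fst d.snd).sum := by
        simp [Function.comp_def, hsymm, two_mul]
    _ = ∑ d ∈ (p.darts ++ p.darts.map Dart.symm).toFinset, f d.fst d.snd :=
        (List.sum_toFinset _ hp.nodup_darts_append_map_symm).symm
    _ ≤ ∑ d : G.Dart, f d.fst d.snd := sum_le_univ_sum_of_nonneg fun d => hf _ _

end Walk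

theorem sum_darts_eq_sum_sum_ite [Fintype V] [DecidableRel G.Adj] {M : Type*} [AddCommMonoid M]
    (f : V → V → M) :
    ∑ d : G.Dart, f d.fst d.snd = ∑ i, ∑ j, if G.Adj i j then f i j else 0 := by
  rw [← sum_product', ← sum_filter]
  exact sum_bij' (fun d _ => d.toProd) (fun q hq => ⟨q, (mem_filter.1 hq).2⟩)
    (fun d _ => by simp [d.adj]) (by simp) (by simp) (by simp) (by simp)

namespace IsLapEigenpair

variable [Fintype V] [DecidableEq V] [DecidableRel G.Adj] {l : ℝ} {φ : V → ℝ}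

theorem sum_eq_zero_s6 (h : G.IsLapEigenpair l φ) (hl : l ≠ 0) : ∑ v, φ v = 0 := by
  have hL : (fun _ => (1 : ℝ)) ⬝ᵥ (G.lapMatrix ℝ *ᵥ φ) = 0 := by
    rw [dotProduct_mulVec, ← mulVec_transpose, G.isSymm_lapMatrix (R := ℝ),
      lapMatrix_mulVec_const_eq_zero, zero_dotProduct]
  rw [h.2, dotProduct_smul, smul_eq_mul, mul_eq_zero] at hL
  simpa [dotProduct] using hL.resolve_left hl

theorem sum_darts_sq_sub_eq (h : G.IsLapEigenpair l φ) :
    ∑ d : G.Dart, (φ d.fst - φ d.snd) ^ 2 = 2 * l * ∑ v, φ v ^ 2 := by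
  have hL := G.lapMatrix_toLinearMap₂' ℝ φ
  rw [toLinearMap₂'_apply', h.2, dotProduct_smul, smul_eq_mul] at hL
  rw [sum_darts_eq_sum_sum_ite (f := fun a b => (φ a - φ b) ^ 2)]
  simp only [dotProduct, ← sq] at hL
  linarith

end IsLapEigenpair

end SimpleGraph

theorem exists_mul_nonpos_of_sum_eq_zero {ι R : Type*} [Fintype ι] [Nonempty ι] [Ring R]
    [LinearOrder R] [IsStrictOrderedRing R] {f : ι → R} (hf : ∑ i, f i = 0) (c : R) :
    ∃ i, f i * c ≤ 0 := by
  by_contra! hpos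
  have := Finset.sum_pos (fun i _ => hpos i) univ_nonempty
  rw [← Finset.sum_mul, hf, zero_mul] at this
  exact this.false

theorem abs_eigenvector_le_sqrt_eigenvalue_mul_diam_general {V : Type*} [Fintype V] [DecidableEq V]
    (G : SimpleGraph V) [DecidableRel G.Adj] (hconn : G.Connected)
    (l : ℝ) (hl : 0 < l) (φ : V → ℝ)
    (hpair : G.IsLapEigenpair l φ) (hnorm : ∑ v : V, φ v ^ 2 = 1) :
    ∀ v : V, |φ v| ≤ Real.sqrt (l * (G.diam : ℝ)) := by
  intro v
  have : Nonempty V := ⟨v⟩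
  obtain ⟨u, hu⟩ := exists_mul_nonpos_of_sum_eq_zero (hpair.sum_eq_zero_s6 hl.ne') (φ v)
  obtain ⟨p, hp, hlen⟩ := hconn.exists_path_of_dist v u
  have hlen_le : (p.length : ℝ) ≤ G.diam := by
    exact_mod_cast hlen ▸ G.dist_le_diam (G.connected_iff_ediam_ne_top.mp hconn)
  have hpath := hp.isTrail.two_mul_sum_darts_le (f := fun a b => (φ a - φ b) ^ 2)
    (fun a b => by ring) (fun _ _ => sq_nonneg _)
  rw [hpair.sum_darts_sq_sub_eq, hnorm] at hpath
  refine Real.abs_le_sqrt ?_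
  calc φ v ^ 2 ≤ (φ v - φ u) ^ 2 := by nlinarith
    _ ≤ p.length * (p.darts.map fun d => (φ d.fst - φ d.snd) ^ 2).sum :=
        hp.isTrail.sq_sub_le_length_mul_sum φ
    _ ≤ G.diam * l := by
        gcongr
        · exact List.sum_nonneg (by simp [sq_nonneg])
        · linarith
    _ = l * G.diam := mul_comm _ _

/-- For a finite connected graph on at least two vertices, a unit eigenvector `φ` of the
Laplacian with positive eigenvalue `l` satisfies `max_v |φ(v)| ≤ √(l · diam G)`. -/
theorem abs_eigenvector_le_sqrt_eigenvalue_mul_diam {V : Type*} [Fintype V] [DecidableEq V]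
    (G : SimpleGraph V) [DecidableRel G.Adj] (hconn : G.Connected)
    (hcard : 2 ≤ Fintype.card V) (l : ℝ) (hl : 0 < l) (φ : V → ℝ)
    (hpair : G.IsLapEigenpair l φ) (hnorm : ∑ v : V, φ v ^ 2 = 1) :
    ∀ v : V, |φ v| ≤ Real.sqrt (l * (G.diam : ℝ)) :=
  abs_eigenvector_le_sqrt_eigenvalue_mul_diam_general G hconn l hl φ hpair hnorm
end

section
/- Let G be a finite tree on at least 2 vertices and let φ be an eigenvector of the Laplacian matrix L = D − A with eigenvalue λ₂(G), normalized so that Σ_{v ∈ V} φ(v)² = 1. Then max_{v ∈ V} |φ(v)| ≤ 4 / diam(G)^{1/2}. -/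
open Matrix

/-!
Two estimates are combined.

First, `λ₂ ≤ 12 / diam²`. For a diametral pair `u, v` take the test vector
`x = d(u, ·) - d(v, ·)`. Every tree edge off the `u`–`v` path has `u` and `v` on the same
side, so `x` changes only across the `diam` edges of that path, by `2`: its energy is at most
`4 diam`. Along the path `x` runs through `-diam, -diam + 2, …, diam`, so after centring, its
squared norm is at least `diam³ / 3`.

Second, let `M = |φ v|` and follow a path `q` from `v` of length at least `diam / 2`. By
Cauchy–Schwarz along the path, `(φ(q_j) - φ(v))² ≤ j λ₂`, so `|φ| ≥ M / 2` on the first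
`min (diam / 2, M² / (4 λ₂))` vertices. Since `∑ φ² = 1`, together with the first estimate
this forces `M² diam ≤ 16`.
-/

open Finset

theorem Matrix.PosSemidef.mul_dotProduct_self_le {n : Type*} [Fintype n] [DecidableEq n]
    {A : Matrix n n ℝ} (hA : A.PosSemidef) {l : ℝ}
    (hl : ∀ μ : ℝ, 0 < μ → (∃ v, v ≠ 0 ∧ A *ᵥ v = μ • v) → l ≤ μ)
    {y : n → ℝ} (hy : ∀ z, A *ᵥ z = 0 → z ⬝ᵥ y = 0) :
    l * (y ⬝ᵥ y) ≤ y ⬝ᵥ (A *ᵥ y) := by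
  set b := hA.isHermitian.eigenvectorBasis
  set μ := hA.isHermitian.eigenvalues
  have parseval (x z : n → ℝ) : ∑ i, (b i ⬝ᵥ x) * (b i ⬝ᵥ z) = x ⬝ᵥ z := by
    have := b.sum_inner_mul_inner (WithLp.toLp 2 x) (WithLp.toLp 2 z)
    simp only [EuclideanSpace.inner_eq_star_dotProduct, star_trivial] at this
    simpa only [dotProduct_comm z] using this
  have hAb (i : n) : b i ⬝ᵥ (A *ᵥ y) = μ i * (b i ⬝ᵥ y) := by
    rw [dotProduct_mulVec, ← mulVec_transpose, ← conjTranspose_eq_transpose_of_trivial,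
      hA.isHermitian.eq, hA.isHermitian.mulVec_eigenvectorBasis, smul_dotProduct, smul_eq_mul]
  rw [← parseval y y, ← parseval y (A *ᵥ y), mul_sum]
  refine sum_le_sum fun i _ => ?_
  rw [hAb]
  rcases (hA.eigenvalues_nonneg i).eq_or_lt with h0 | hpos
  · have : b i ⬝ᵥ y = 0 :=
      hy _ (by rw [hA.isHermitian.mulVec_eigenvectorBasis, ← h0, zero_smul])
    simp [this]
  · have hb0 : (b i : n → ℝ) ≠ 0 := fun h =>
      b.orthonormal.ne_zero i (by simpa using congrArg (WithLp.toLp 2) h)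
    have := hl _ hpos ⟨b i, hb0, hA.isHermitian.mulVec_eigenvectorBasis i⟩
    linarith [mul_le_mul_of_nonneg_right this (mul_self_nonneg (b i ⬝ᵥ y))]

theorem cube_div_three_le_sum_range_sq (D : ℕ) (c : ℝ) :
    (D : ℝ) ^ 3 / 3 ≤ ∑ i ∈ range (D + 1), (2 * i - D - c) ^ 2 := by
  have closed_form (n : ℕ) (b : ℝ) : ∑ i ∈ range n, (2 * (i : ℝ) - b) ^ 2
      = 2 * n * (n - 1) * (2 * n - 1) / 3 - 2 * b * n * (n - 1) + n * b ^ 2 := by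
    induction n with
    | zero => simp
    | succ n ih => rw [sum_range_succ, ih]; push_cast; ring
  simp only [sub_sub, closed_form]
  push_cast
  have hD : (0 : ℝ) ≤ D := D.cast_nonneg
  nlinarith [mul_nonneg (add_nonneg hD zero_le_one) (sq_nonneg c), sq_nonneg (D : ℝ)]

theorem abs_le_four_div_sqrt_of_forall_mul_sq_le {a l D : ℝ} {k : ℕ} (hl : 0 < l) (hD : 0 < D)
    (hlD : l * D ^ 2 ≤ 12) (hk : D ≤ 2 * k)
    (h : ∀ m : ℕ, m ≤ k → m * l ≤ (a / 2) ^ 2 → (m + 1) * (a / 2) ^ 2 ≤ 1) :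
    |a| ≤ 4 / √D := by
  suffices a ^ 2 * D ≤ 16 by
    rw [le_div_iff₀ (Real.sqrt_pos.2 hD), ← sq_le_sq₀ (by positivity) (by norm_num), mul_pow,
      sq_abs, Real.sq_sqrt hD.le]
    linarith
  set t := ⌊(a / 2) ^ 2 / l⌋₊
  have ht : t * l ≤ (a / 2) ^ 2 := (le_div_iff₀ hl).1 (Nat.floor_le (by positivity))
  rcases le_or_gt k t with hkt | htk
  · have hkl : k * l ≤ (a / 2) ^ 2 :=
      (mul_le_mul_of_nonneg_right (by exact_mod_cast hkt) hl.le).trans ht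
    nlinarith [h k le_rfl hkl, sq_nonneg a]
  · have hmass := h t htk.le ht
    have hlt : (a / 2) ^ 2 < (t + 1) * l := (div_lt_iff₀ hl).1 (Nat.lt_floor_add_one _)
    have h4 : ((a / 2) ^ 2) ^ 2 ≤ l := by nlinarith [sq_nonneg a]
    nlinarith [mul_le_mul_of_nonneg_right h4 (sq_nonneg D), sq_nonneg (a ^ 2 * D - 16)]

namespace SimpleGraph

variable {V : Type*} {G : SimpleGraph V}

def edgeEnergy (x : V → ℝ) : Sym2 V → ℝ :=
  Sym2.lift ⟨fun a b => (x a - x b) ^ 2, fun a b => by ring⟩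

@[simp]
lemma edgeEnergy_mk (x : V → ℝ) (a b : V) : edgeEnergy x s(a, b) = (x a - x b) ^ 2 := rfl

lemma edgeEnergy_nonneg (x : V → ℝ) (e : Sym2 V) : 0 ≤ edgeEnergy x e := by
  induction e using Sym2.ind with | _ a b => exact sq_nonneg _

lemma reachable_deleteEdges_of_dist_lt {a b z : V} (hzb : G.Reachable z b)
    (hlt : G.dist z b < G.dist z a) : (G.deleteEdges {s(a, b)}).Reachable z b := by
  classical
  obtain ⟨p, hp⟩ := hzb.exists_walk_length_eq_dist
  by_contra hn
  have ha : a ∈ p.support :=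
    p.fst_mem_support_of_mem_edges (p.mem_edges_of_not_reachable_deleteEdges hn)
  have := (dist_le (p.takeUntil a ha)).trans (p.length_takeUntil_le_length ha)
  omega

lemma IsTree.dist_add_dist_eq_of_reachable_deleteEdges (hG : G.IsTree) {a b u v : V}
    (hab : G.Adj a b) (huv : (G.deleteEdges {s(a, b)}).Reachable u v) :
    G.dist u a + G.dist v b = G.dist u b + G.dist v a := by
  have same_side {a b : V} (hab : G.Adj a b) {u v : V}
      (huv : (G.deleteEdges {s(a, b)}).Reachable u v) (hu : G.dist u b < G.dist u a) :
      G.dist v b < G.dist v a := by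
    by_contra hv
    have hva : G.dist v a < G.dist v b := (not_lt.1 hv).lt_of_ne (hG.dist_ne_of_adj v hab)
    have hub := reachable_deleteEdges_of_dist_lt (hG.connected u b) hu
    have hva := reachable_deleteEdges_of_dist_lt (hG.connected v a) hva
    rw [Sym2.eq_swap] at hva
    exact isBridge_iff.1 (isAcyclic_iff_forall_adj_isBridge.1 hG.isAcyclic hab)
      ((hub.symm.trans huv).trans hva).symm
  have hba : (G.deleteEdges {s(b, a)}).Reachable u v := Sym2.eq_swap ▸ huv
  rcases hG.dist_eq_dist_add_one_of_adj u hab with hu | hu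
  · have := same_side hab huv (by omega)
    rcases hG.dist_eq_dist_add_one_of_adj v hab with hv | hv <;> omega
  · have := same_side hab.symm hba (by omega)
    rcases hG.dist_eq_dist_add_one_of_adj v hab with hv | hv <;> omega

lemma Connected.exists_diam_le_two_mul_dist (hG : G.Connected) (v : V) :
    ∃ w, G.diam ≤ 2 * G.dist v w := by
  have := hG.nonempty
  obtain ⟨a, b, hab⟩ := G.exists_dist_eq_diam
  have := hG.dist_triangle (u := a) (v := v) (w := b)
  have := G.dist_comm (u := a) (v := v)
  by_cases h : G.dist v b ≤ G.dist v a
  · exact ⟨a, by omega⟩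
  · exact ⟨b, by omega⟩

namespace Walk

variable {u w : V}

lemma sum_range_length_sq_sub_getVert (p : G.Walk u w) (x : V → ℝ) :
    ∑ i ∈ range p.length, (x (p.getVert (i + 1)) - x (p.getVert i)) ^ 2
      = (p.edges.map (edgeEnergy x)).sum := by
  induction p with
  | nil => simp
  | cons h q ih =>
    rw [length_cons, sum_range_succ', edges_cons, List.map_cons, List.sum_cons]
    simp only [getVert_cons_succ, getVert_zero, ih, edgeEnergy_mk]
    ring

lemma sq_sub_le_length_mul_sum_edgeEnergy (p : G.Walk u w) (x : V → ℝ) :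
    (x w - x u) ^ 2 ≤ p.length * (p.edges.map (edgeEnergy x)).sum := by
  have telescope :
      x w - x u = ∑ i ∈ range p.length, (x (p.getVert (i + 1)) - x (p.getVert i)) := by
    rw [sum_range_sub (fun i => x (p.getVert i)), getVert_length, getVert_zero]
  have := sq_sum_le_card_mul_sum_sq (s := range p.length)
    (f := fun i => x (p.getVert (i + 1)) - x (p.getVert i))
  rwa [card_range, sum_range_length_sq_sub_getVert, ← telescope] at this

lemma dist_getVert_of_length_eq_dist (p : G.Walk u w)
    (hp : p.length = G.dist u w) {i : ℕ} (hi : i ≤ p.length) :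
    G.dist u (p.getVert i) = i ∧ G.dist (p.getVert i) w = p.length - i := by
  have h₁ : G.dist u (p.getVert i) ≤ i := by
    simpa [hi] using dist_le (p.take i)
  have h₂ : G.dist (p.getVert i) w ≤ p.length - i := by
    simpa using dist_le (p.drop i)
  have := (p.take i).reachable.dist_triangle_left w
  omega

lemma IsPath.sum_range_getVert_le [Fintype V] {p : G.Walk u w} (hp : p.IsPath) {f : V → ℝ}
    (hf : 0 ≤ f) {m : ℕ} (hm : m ≤ p.length) :
    ∑ i ∈ range (m + 1), f (p.getVert i) ≤ ∑ v, f v := by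
  classical
  rw [← sum_image (hp.getVert_injOn.mono fun i hi => by
    simp only [coe_range, Set.mem_Iio] at hi
    exact Set.mem_ofPred.2 (by omega))]
  exact sum_le_sum_of_subset_of_nonneg (subset_univ _) fun v _ _ => hf v

end Walk

variable [Fintype V] [DecidableEq V] [DecidableRel G.Adj]

variable (G) in
theorem dotProduct_lapMatrix_mulVec_eq_sum_edgeEnergy (x : V → ℝ) :
    x ⬝ᵥ (G.lapMatrix ℝ *ᵥ x) = ∑ e ∈ G.edgeFinset, edgeEnergy x e := by
  have sum_adj : ∑ i, ∑ j, (if G.Adj i j then (x i - x j) ^ 2 else 0)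
      = ∑ d : G.Dart, edgeEnergy x d.edge := by
    rw [← Fintype.sum_prod_type', ← sum_filter]
    refine sum_bij' (fun p hp => ⟨p, (mem_filter.1 hp).2⟩) (fun d _ => d.toProd) ?_ ?_ ?_ ?_ ?_
      <;> simp [Dart.edge]
  have sum_darts :
      ∑ d : G.Dart, edgeEnergy x d.edge = 2 * ∑ e ∈ G.edgeFinset, edgeEnergy x e := by
    rw [← sum_fiberwise_of_maps_to (t := G.edgeFinset) (g := Dart.edge)
      (fun d _ => mem_edgeFinset.2 d.edge_mem), mul_sum]
    refine sum_congr rfl fun e he => ?_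
    rw [sum_congr rfl fun d hd => congrArg (edgeEnergy x) (mem_filter.1 hd).2, sum_const,
      G.dart_edge_fiber_card e (mem_edgeFinset.1 he), nsmul_eq_mul, Nat.cast_ofNat]
  rw [← toLinearMap₂'_apply', lapMatrix_toLinearMap₂', sum_adj, sum_darts]
  ring

namespace Walk

variable {u w : V}

lemma IsTrail.sum_edgeEnergy_le {p : G.Walk u w} (hp : p.IsTrail) (x : V → ℝ) :
    (p.edges.map (edgeEnergy x)).sum ≤ x ⬝ᵥ (G.lapMatrix ℝ *ᵥ x) := by
  rw [dotProduct_lapMatrix_mulVec_eq_sum_edgeEnergy, ← List.sum_toFinset _ hp.edges_nodup]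
  exact sum_le_sum_of_subset_of_nonneg
    (fun e he => mem_edgeFinset.2 (p.edges_subset_edgeSet (List.mem_toFinset.1 he)))
    (fun e _ _ => edgeEnergy_nonneg x e)

lemma IsTrail.sq_sub_le_length_mul {p : G.Walk u w} (hp : p.IsTrail) (x : V → ℝ) :
    (x w - x u) ^ 2 ≤ p.length * (x ⬝ᵥ (G.lapMatrix ℝ *ᵥ x)) :=
  (p.sq_sub_le_length_mul_sum_edgeEnergy x).trans
    (mul_le_mul_of_nonneg_left (hp.sum_edgeEnergy_le x) p.length.cast_nonneg)

theorem IsPath.add_one_mul_sq_le {p : G.Walk u w} (hp : p.IsPath) (x : V → ℝ) {m : ℕ}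
    (hm : m ≤ p.length) (hE : m * (x ⬝ᵥ (G.lapMatrix ℝ *ᵥ x)) ≤ (x u / 2) ^ 2) :
    (m + 1) * (x u / 2) ^ 2 ≤ ∑ v, x v ^ 2 := by
  have hE0 : 0 ≤ x ⬝ᵥ (G.lapMatrix ℝ *ᵥ x) := by
    simpa using (G.posSemidef_lapMatrix ℝ).dotProduct_mulVec_nonneg x
  have near (j : ℕ) (hj : j ≤ m) : (x u / 2) ^ 2 ≤ x (p.getVert j) ^ 2 := by
    have h := (hp.take j).isTrail.sq_sub_le_length_mul x
    rw [take_length, min_eq_left (hj.trans hm)] at h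
    have hjm : (j : ℝ) * _ ≤ m * _ := mul_le_mul_of_nonneg_right (by exact_mod_cast hj) hE0
    have h2 : (x (p.getVert j) - x u) ^ 2 ≤ (x u / 2) ^ 2 := by linarith
    have := abs_sub_abs_le_abs_sub (x u) (x (p.getVert j))
    rw [sq_le_sq, abs_sub_comm, abs_div] at h2
    rw [sq_le_sq, abs_div]
    norm_num at h2 ⊢
    linarith
  calc (m + 1) * (x u / 2) ^ 2 = ∑ _i ∈ range (m + 1), (x u / 2) ^ 2 := by simp
    _ ≤ ∑ i ∈ range (m + 1), x (p.getVert i) ^ 2 :=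
      sum_le_sum fun j hj => near j (Nat.lt_succ_iff.1 (mem_range.1 hj))
    _ ≤ ∑ v, x v ^ 2 := hp.sum_range_getVert_le (fun v => sq_nonneg (x v)) hm

end Walk

theorem IsTree.sum_edgeEnergy_dist_sub_dist_le (hG : G.IsTree) (u v : V) :
    ∑ e ∈ G.edgeFinset, edgeEnergy (fun z => (G.dist u z : ℝ) - G.dist v z) e
      ≤ 4 * G.dist u v := by
  set x : V → ℝ := fun z => G.dist u z - G.dist v z
  obtain ⟨p, hp⟩ := hG.connected.exists_walk_length_eq_dist u v
  have edge_bound : ∀ e ∈ G.edgeFinset,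
      edgeEnergy x e ≤ if e ∈ p.edges.toFinset then 4 else 0 := by
    intro e he
    induction e using Sym2.ind with | _ a b =>
    have hab : G.Adj a b := mem_edgeFinset.1 he
    split_ifs with hab_mem
    · rcases hG.dist_eq_dist_add_one_of_adj u hab with hu | hu <;>
      rcases hG.dist_eq_dist_add_one_of_adj v hab with hv | hv <;>
      · simp only [edgeEnergy_mk, x, hu, hv]; push_cast; ring_nf; norm_num
    · have hpab : s(a, b) ∉ p.edges := by simpa using hab_mem
      have := hG.dist_add_dist_eq_of_reachable_deleteEdges hab
        (reachable_deleteEdges_iff_exists_walk.2 ⟨p, hpab⟩)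
      have : (G.dist u a : ℝ) + G.dist v b = G.dist u b + G.dist v a := by exact_mod_cast this
      have hx : x a = x b := by simp only [x]; linarith
      simp [hx]
  calc ∑ e ∈ G.edgeFinset, edgeEnergy x e
      ≤ ∑ e ∈ G.edgeFinset, if e ∈ p.edges.toFinset then (4 : ℝ) else 0 :=
        sum_le_sum edge_bound
    _ = 4 * #(G.edgeFinset ∩ p.edges.toFinset) := by rw [sum_ite_mem, sum_const]; simp [mul_comm]
    _ ≤ 4 * G.dist u v := by
      rw [← hp, ← Walk.length_edges]
      gcongr
      exact_mod_cast (card_le_card inter_subset_right).trans (List.toFinset_card_le _)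

variable {l : ℝ}

theorem IsSecondLapEigenvalue.mul_dotProduct_self_le (hl : G.IsSecondLapEigenvalue l)
    (hG : G.Connected) {y : V → ℝ} (hy : ∑ v, y v = 0) :
    l * (y ⬝ᵥ y) ≤ y ⬝ᵥ (G.lapMatrix ℝ *ᵥ y) :=
  (G.posSemidef_lapMatrix ℝ).mul_dotProduct_self_le hl.2.2 fun z hz => by
    obtain ⟨v⟩ := hG.nonempty
    have hz : z = fun _ => z v := funext fun w =>
      (lapMatrix_mulVec_eq_zero_iff_forall_reachable G).1 hz w v (hG w v)
    rw [hz]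
    simp [dotProduct, ← mul_sum, hy]

theorem IsSecondLapEigenvalue.mul_diam_sq_le_twelve (hl : G.IsSecondLapEigenvalue l)
    (hG : G.IsTree) : l * G.diam ^ 2 ≤ 12 := by
  have := hG.connected.nonempty
  obtain ⟨u, v, huv⟩ := G.exists_dist_eq_diam
  obtain ⟨P, hP⟩ := hG.connected.exists_walk_length_eq_dist u v
  set D := G.diam
  set x : V → ℝ := fun z => G.dist u z - G.dist v z
  set c := (∑ z, x z) / Fintype.card V
  set y : V → ℝ := fun z => x z - c
  have hy : ∑ z, y z = 0 := by
    simp only [y, c, sum_sub_distrib, sum_const, card_univ, nsmul_eq_mul]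
    field_simp
    ring
  have hxP (i : ℕ) (hi : i ≤ D) : x (P.getVert i) = 2 * i - D := by
    obtain ⟨h₁, h₂⟩ := P.dist_getVert_of_length_eq_dist hP (i := i) (by omega)
    simp only [x, h₁, G.dist_comm (u := v), h₂, hP, huv]
    push_cast [hi]
    ring
  have hden : (D : ℝ) ^ 3 / 3 ≤ y ⬝ᵥ y := calc
    _ ≤ ∑ i ∈ range (D + 1), (2 * i - D - c) ^ 2 := cube_div_three_le_sum_range_sq D c
    _ = ∑ i ∈ range (D + 1), y (P.getVert i) ^ 2 :=
      sum_congr rfl fun i hi => by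
        rw [show y (P.getVert i) = x (P.getVert i) - c from rfl,
          hxP i (Nat.lt_succ_iff.1 (mem_range.1 hi))]
    _ ≤ ∑ z, y z ^ 2 :=
      (P.isPath_of_length_eq_dist hP).sum_range_getVert_le (fun z => sq_nonneg _) (by omega)
    _ = y ⬝ᵥ y := by simp [dotProduct, sq]
  have hnum : y ⬝ᵥ (G.lapMatrix ℝ *ᵥ y) ≤ 4 * D := by
    have shift (e : Sym2 V) : edgeEnergy y e = edgeEnergy x e := by
      induction e using Sym2.ind with | _ a b => simp [y]
    simp only [dotProduct_lapMatrix_mulVec_eq_sum_edgeEnergy, shift, ← huv]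
    exact hG.sum_edgeEnergy_dist_sub_dist_le u v
  have key : l * (D ^ 3 / 3) ≤ 4 * D := (mul_le_mul_of_nonneg_left hden hl.2.1.le).trans
    ((hl.mul_dotProduct_self_le hG.connected hy).trans hnum)
  rcases D.eq_zero_or_pos with hD | hD
  · simp [hD]
  · have : l * D ^ 2 * D ≤ 12 * D := by linarith
    exact le_of_mul_le_mul_right this (by exact_mod_cast hD)

end SimpleGraph

/-- For a finite tree on at least two vertices, a unit Fiedler vector `φ` satisfies
`max_v |φ(v)| ≤ 4 / diam(G)^{1/2}`. -/
theorem abs_fiedler_le_four_div_sqrt_diam {V : Type*} [Fintype V] [DecidableEq V]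
    (G : SimpleGraph V) [DecidableRel G.Adj] (hT : G.IsTree) (hcard : 2 ≤ Fintype.card V)
    (l : ℝ) (hl : G.IsSecondLapEigenvalue l) (φ : V → ℝ)
    (hpair : G.IsLapEigenpair l φ) (hnorm : ∑ v : V, φ v ^ 2 = 1) :
    ∀ v : V, |φ v| ≤ 4 / Real.sqrt (G.diam : ℝ) := by
  intro v
  have : Nontrivial V := Fintype.one_lt_card_iff_nontrivial.mp hcard
  have hD : 0 < (G.diam : ℝ) :=
    Nat.cast_pos.2 (Nat.pos_of_ne_zero (SimpleGraph.connected_iff_diam_ne_zero.1 hT.connected))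
  have hE : φ ⬝ᵥ (G.lapMatrix ℝ *ᵥ φ) = l := by
    have hφ : φ ⬝ᵥ φ = 1 := by simpa [dotProduct, sq] using hnorm
    rw [hpair.2, dotProduct_smul, smul_eq_mul, hφ, mul_one]
  obtain ⟨w, hw⟩ := hT.connected.exists_diam_le_two_mul_dist v
  obtain ⟨q, hq, hqlen⟩ := hT.connected.exists_path_of_dist v w
  refine abs_le_four_div_sqrt_of_forall_mul_sq_le hl.2.1 hD (hl.mul_diam_sq_le_twelve hT)
    (k := q.length) (by exact_mod_cast hqlen ▸ hw) fun m hm hml => ?_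
  exact hnorm ▸ hq.add_one_mul_sq_le φ hm (hE ▸ hml)
end
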